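/- arXiv:1008.2894 — 16 statements merged into one kernel-verified Lean document; each statement's English description precedes it below -/
import Mathlib

section
/- For all positive integers n and nonnegative integers r, the sum over k from 0 to n-1 of (2k+1)·k^r·(k+1)^r·A_k is divisible by n, where A_k is the k-th Apéry number. -/
/-!
Write `A_k = ∑ₘ F_m(k)` with `F_m(k) = C(2m,m)² C(k+m,2m)²` and introduce the companion terms
`G_m(k) = (2m+1)² C(2m,m)² C(k+m,2m+1) C(k+m+1,2m+1)`. Multiplication by `k(k+1)` acts on them
as a ladder:
`k(k+1) F_m = m(m+1) F_m + G_m` and `k(k+1) G_m = m(m+1) G_m + (m+1)⁴ F_{m+1}`.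
Hence, by induction on `r`, it suffices that `n` divides `∑_{k<n} (2k+1) F_m(k)` and
`∑_{k<n} (2k+1) G_m(k)`. Both sums telescope to closed forms carrying the factor
`(2m+1) C(2m,m) C(n+m,2m+1) = n C(n+m,m) C(n-1,m)`.
-/

def apery (n : ℕ) : ℕ :=
  ∑ k ∈ Finset.range (n + 1), (Nat.choose (n + k) (2 * k))^2 * (Nat.choose (2 * k) k)^2

open Finset

theorem add_one_mul_choose_succ_add_mul_choose (N j : ℕ) :
    (j + 1) * N.choose (j + 1) + j * N.choose j = N * N.choose j := by
  rcases le_or_gt j N with h | h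
  · rw [mul_comm, Nat.choose_succ_right_eq, mul_comm j, ← mul_add, Nat.sub_add_cancel h,
      mul_comm]
  · simp [Nat.choose_eq_zero_of_lt h, Nat.choose_eq_zero_of_lt (Nat.lt_succ_of_lt h)]

theorem dvd_mul_centralBinom_mul_choose (n m : ℕ) :
    n ∣ (2 * m + 1) * m.centralBinom * (n + m).choose (2 * m + 1) := by
  obtain _ | n := n
  · simp [Nat.choose_eq_zero_of_lt (show m < 2 * m + 1 by omega)]
  have hcentral : (2 * m + 1) * m.centralBinom = (m + 1) * (2 * m + 1).choose m := by
    rw [Nat.centralBinom_eq_two_mul_choose, Nat.add_one_mul_choose_eq, Nat.choose_symm_half,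
      mul_comm]
  have hsplit : (n + 1 + m).choose (2 * m + 1) * (2 * m + 1).choose m
      = (n + 1 + m).choose m * (n + 1).choose (m + 1) := by
    rw [Nat.choose_mul (by omega), Nat.add_sub_cancel, show 2 * m + 1 - m = m + 1 by omega]
  have hn : n + 1 ∣ (m + 1) * (n + 1).choose (m + 1) :=
    ⟨n.choose m, by rw [Nat.add_one_mul_choose_eq, mul_comm]⟩
  rw [hcentral, mul_assoc, mul_comm ((2 * m + 1).choose m), hsplit, mul_left_comm]
  exact hn.mul_left _

theorem sum_two_mul_add_one_mul_choose_sq (m n : ℕ) :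
    ∑ k ∈ range n, (2 * k + 1) * (k + m).choose (2 * m) ^ 2
      = (2 * m + 1) * (n + m).choose (2 * m + 1) ^ 2 := by
  refine sum_range_induction _ (fun n => (2 * m + 1) * (n + m).choose (2 * m + 1) ^ 2)
    (by simp [Nat.choose_eq_zero_of_lt (show m < 2 * m + 1 by omega)]) n fun n _ => ?_
  rw [show n + 1 + m = n + m + 1 by ring, Nat.choose_succ_succ']
  have h := add_one_mul_choose_succ_add_mul_choose (n + m) (2 * m)
  zify at h ⊢
  linear_combination (2 * ((n + m).choose (2 * m) : ℤ)) * h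

theorem sum_two_mul_add_one_mul_choose_mul_choose (m n : ℕ) :
    ∑ k ∈ range n, (2 * k + 1) * ((k + m).choose (2 * m + 1) * (k + m + 1).choose (2 * m + 1))
      = (2 * m + 3) * (n + m).choose (2 * m + 1) * (n + m + 1).choose (2 * m + 3) := by
  refine sum_range_induction _
    (fun n => (2 * m + 3) * (n + m).choose (2 * m + 1) * (n + m + 1).choose (2 * m + 3))
    (by simp [Nat.choose_eq_zero_of_lt (show m < 2 * m + 1 by omega)]) n fun n _ => ?_
  rw [show n + 1 + m = n + m + 1 by ring, Nat.choose_succ_succ' (n + m + 1),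
    Nat.choose_succ_succ' (n + m), Nat.choose_succ_succ' (n + m) (2 * m + 1),
    Nat.choose_succ_succ' (n + m) (2 * m + 2), show 2 * m + 1 + 1 = 2 * m + 2 from rfl,
    show 2 * m + 2 + 1 = 2 * m + 3 from rfl]
  have h1 := add_one_mul_choose_succ_add_mul_choose (n + m) (2 * m)
  have h2 : (2 * m + 2) * (n + m).choose (2 * m + 2) + (2 * m + 1) * (n + m).choose (2 * m + 1)
      = (n + m) * (n + m).choose (2 * m + 1) := add_one_mul_choose_succ_add_mul_choose _ _
  have h3 : (2 * m + 3) * (n + m).choose (2 * m + 3) + (2 * m + 2) * (n + m).choose (2 * m + 2)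
      = (n + m) * (n + m).choose (2 * m + 2) := add_one_mul_choose_succ_add_mul_choose _ _
  zify at h1 h2 h3 ⊢
  linear_combination
    (2 * ((n + m).choose (2 * m) : ℤ) + 2 * ((n + m).choose (2 * m + 1) : ℤ)) * h2
      + ((n + m).choose (2 * m) : ℤ) * h3 - ((n + m).choose (2 * m + 2) : ℤ) * h1

def aperyF (m k : ℕ) : ℕ := m.centralBinom ^ 2 * (k + m).choose (2 * m) ^ 2

def aperyG (m k : ℕ) : ℕ :=
  (2 * m + 1) ^ 2 * m.centralBinom ^ 2 *
    ((k + m).choose (2 * m + 1) * (k + m + 1).choose (2 * m + 1))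

theorem mul_aperyF (m k : ℕ) :
    k * (k + 1) * aperyF m k = m * (m + 1) * aperyF m k + aperyG m k := by
  have h1 := add_one_mul_choose_succ_add_mul_choose (k + m) (2 * m)
  have h2 := Nat.add_one_mul_choose_eq (k + m) (2 * m)
  simp only [aperyF, aperyG]
  zify at h1 h2 ⊢
  linear_combination
    (m.centralBinom : ℤ) ^ 2 * ((k : ℤ) - m) * ((k + m).choose (2 * m) : ℤ) * h2
      - (m.centralBinom : ℤ) ^ 2 * (2 * m + 1) * ((k + m + 1).choose (2 * m + 1) : ℤ) * h1

theorem mul_aperyG (m k : ℕ) :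
    k * (k + 1) * aperyG m k = m * (m + 1) * aperyG m k + (m + 1) ^ 4 * aperyF (m + 1) k := by
  have h1 : (2 * m + 2) * (k + m + 1).choose (2 * m + 2)
        + (2 * m + 1) * (k + m + 1).choose (2 * m + 1)
      = (k + m + 1) * (k + m + 1).choose (2 * m + 1) := add_one_mul_choose_succ_add_mul_choose _ _
  have h2 : (k + m + 1) * (k + m).choose (2 * m + 1)
      = (k + m + 1).choose (2 * m + 2) * (2 * m + 2) :=
    Nat.add_one_mul_choose_eq _ _
  have h3 := Nat.succ_mul_centralBinom_succ m
  simp only [aperyF, aperyG]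
  rw [show k + (m + 1) = k + m + 1 by ring, show 2 * (m + 1) = 2 * m + 2 by ring]
  zify at h1 h2 h3 ⊢
  linear_combination
    (2 * m + 1 : ℤ) ^ 2 * (m.centralBinom : ℤ) ^ 2 * ((k : ℤ) - m)
        * ((k + m + 1).choose (2 * m + 1) : ℤ) * h2
      - (2 * m + 1 : ℤ) ^ 2 * (m.centralBinom : ℤ) ^ 2 * (2 * m + 2)
        * ((k + m + 1).choose (2 * m + 2) : ℤ) * h1
      - ((m : ℤ) + 1) ^ 2 * ((k + m + 1).choose (2 * m + 2) : ℤ) ^ 2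
        * (((m : ℤ) + 1) * (m + 1).centralBinom + 2 * (2 * m + 1) * m.centralBinom) * h3

def weightedSum (r n : ℕ) (f : ℕ → ℕ) : ℕ :=
  ∑ k ∈ range n, (2 * k + 1) * (k * (k + 1)) ^ r * f k

theorem weightedSum_succ {f g : ℕ → ℕ} {c d : ℕ}
    (h : ∀ k, k * (k + 1) * f k = c * f k + d * g k) (r n : ℕ) :
    weightedSum (r + 1) n f = c * weightedSum r n f + d * weightedSum r n g := by
  simp only [weightedSum, mul_sum, ← sum_add_distrib]
  refine sum_congr rfl fun k _ => ?_
  calc (2 * k + 1) * (k * (k + 1)) ^ (r + 1) * f k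
      = (2 * k + 1) * (k * (k + 1)) ^ r * (k * (k + 1) * f k) := by ring
    _ = _ := by rw [h k]; ring

theorem dvd_weightedSum_zero_aperyF (m n : ℕ) : n ∣ weightedSum 0 n (aperyF m) := by
  have hsum : weightedSum 0 n (aperyF m)
      = m.centralBinom ^ 2 * ((2 * m + 1) * (n + m).choose (2 * m + 1) ^ 2) := by
    simp only [weightedSum, aperyF, pow_zero, mul_one, ← sum_two_mul_add_one_mul_choose_sq,
      mul_sum]
    exact sum_congr rfl fun k _ => by ring
  rw [hsum]
  exact (dvd_mul_centralBinom_mul_choose n m).trans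
    ⟨m.centralBinom * (n + m).choose (2 * m + 1), by ring⟩

theorem dvd_weightedSum_zero_aperyG (m n : ℕ) : n ∣ weightedSum 0 n (aperyG m) := by
  have hsum : weightedSum 0 n (aperyG m) = (2 * m + 1) ^ 2 * m.centralBinom ^ 2 *
      ((2 * m + 3) * (n + m).choose (2 * m + 1) * (n + m + 1).choose (2 * m + 3)) := by
    simp only [weightedSum, aperyG, pow_zero, mul_one,
      ← sum_two_mul_add_one_mul_choose_mul_choose, mul_sum]
    exact sum_congr rfl fun k _ => by ring
  rw [hsum]
  exact (dvd_mul_centralBinom_mul_choose n m).trans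
    ⟨(2 * m + 1) * m.centralBinom * (2 * m + 3) * (n + m + 1).choose (2 * m + 3), by ring⟩

theorem dvd_weightedSum_aperyF_and_aperyG (n r : ℕ) :
    ∀ m, n ∣ weightedSum r n (aperyF m) ∧ n ∣ weightedSum r n (aperyG m) := by
  induction r with
  | zero => exact fun m => ⟨dvd_weightedSum_zero_aperyF m n, dvd_weightedSum_zero_aperyG m n⟩
  | succ r ih =>
    intro m
    refine ⟨?_, ?_⟩
    · rw [weightedSum_succ (d := 1) fun k => (one_mul (aperyG m k)).symm ▸ mul_aperyF m k]
      exact dvd_add ((ih m).1.mul_left _) ((ih m).2.mul_left _)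
    · rw [weightedSum_succ (mul_aperyG m)]
      exact dvd_add ((ih m).2.mul_left _) ((ih (m + 1)).1.mul_left _)

theorem apery_eq_sum_aperyF {k n : ℕ} (hk : k < n) : apery k = ∑ m ∈ range n, aperyF m k := by
  have hvanish : ∀ m ∈ Ico (k + 1) n, aperyF m k = 0 := fun m hm => by
    rw [mem_Ico] at hm
    simp [aperyF, Nat.choose_eq_zero_of_lt (show k + m < 2 * m by omega)]
  rw [← sum_range_add_sum_Ico _ hk, sum_eq_zero hvanish, add_zero, apery]
  exact sum_congr rfl fun m _ => by rw [aperyF, Nat.centralBinom_eq_two_mul_choose, mul_comm]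

theorem stmt0_general (n : ℕ) (r : ℕ) :
    n ∣ ∑ k ∈ Finset.range n, (2 * k + 1) * k ^ r * (k + 1) ^ r * apery k := by
  have hregroup : ∑ k ∈ range n, (2 * k + 1) * k ^ r * (k + 1) ^ r * apery k
      = ∑ m ∈ range n, weightedSum r n (aperyF m) := by
    simp only [weightedSum]
    rw [sum_comm]
    refine sum_congr rfl fun k hk => ?_
    rw [apery_eq_sum_aperyF (mem_range.1 hk), mul_sum, mul_pow, mul_assoc (2 * k + 1)]
  rw [hregroup]
  exact dvd_sum fun m _ => (dvd_weightedSum_aperyF_and_aperyG n r m).1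

theorem stmt0 (n : ℕ) (hn : 0 < n) (r : ℕ) :
    n ∣ ∑ k ∈ Finset.range n, (2 * k + 1) * k ^ r * (k + 1) ^ r * apery k :=
  stmt0_general n r
end

section
/- For all positive integers n and nonnegative integers r, the sum over k from 0 to n-1 of (2k+1)^{2r+1}·A_k is divisible by n, where A_k is the k-th Apéry number. -/
open Finset

/-- Up to sign, the coefficient of `Xⁱ` in `Polynomial.shiftedLegendre k`. -/
def legendreCoeff (k i : ℕ) : ℕ := k.choose i * (k + i).choose i

lemma legendreCoeff_eq_zero_of_lt {k i : ℕ} (h : k < i) : legendreCoeff k i = 0 := by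
  simp [legendreCoeff, Nat.choose_eq_zero_of_lt h]

lemma apery_eq_sum_legendreCoeff_sq (k : ℕ) :
    apery k = ∑ i ∈ range (k + 1), legendreCoeff k i ^ 2 := by
  refine sum_congr rfl fun i _ => ?_
  have h := Nat.choose_mul (n := k + i) (show i ≤ 2 * i by omega)
  rw [show k + i - i = k by omega, show 2 * i - i = i by omega] at h
  rw [legendreCoeff, ← mul_pow, h, mul_comm]

lemma apery_eq_sum_range_legendreCoeff_sq {k n : ℕ} (h : k < n) :
    apery k = ∑ i ∈ range n, legendreCoeff k i ^ 2 := by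
  rw [apery_eq_sum_legendreCoeff_sq]
  refine sum_subset (range_subset_range.mpr h) fun i _ hi => ?_
  simp [legendreCoeff_eq_zero_of_lt (by simpa using hi : k < i)]

lemma sub_mul_legendreCoeff_succ_left (k i : ℕ) :
    (k + 1 - i) * legendreCoeff (k + 1) i = (k + 1 + i) * legendreCoeff k i := by
  have h₁ := Nat.choose_mul_succ_eq k i
  have h₂ := Nat.choose_mul_succ_eq (k + i) i
  rw [show k + i + 1 - i = k + 1 by omega, show k + i + 1 = k + 1 + i by omega] at h₂
  apply Nat.eq_of_mul_eq_mul_right (by omega : 0 < k + 1)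
  unfold legendreCoeff
  linear_combination
    (k + 1 - i) * (k + 1).choose i * h₂.symm + (k + i).choose i * (k + 1 + i) * h₁.symm

lemma sq_mul_legendreCoeff_succ_right (k j : ℕ) :
    (j + 1) ^ 2 * legendreCoeff k (j + 1) = (k - j) * (k + j + 1) * legendreCoeff k j := by
  have h₁ := Nat.choose_succ_right_eq k j
  have h₂ := Nat.add_one_mul_choose_eq (k + j) j
  unfold legendreCoeff
  rw [← add_assoc]
  linear_combination (k + j + 1).choose (j + 1) * (j + 1) * h₁ + k.choose j * (k - j) * h₂.symm

lemma odd_sq_mul_legendreCoeff (k j : ℕ) :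
    (2 * k + 1) ^ 2 * legendreCoeff k j
      = 4 * (j + 1) ^ 2 * legendreCoeff k (j + 1) + (2 * j + 1) ^ 2 * legendreCoeff k j := by
  rcases lt_or_ge k j with hkj | hjk
  · simp [legendreCoeff_eq_zero_of_lt hkj, legendreCoeff_eq_zero_of_lt (hkj.trans j.lt_succ_self)]
  have h := sq_mul_legendreCoeff_succ_right k j
  zify [hjk] at h ⊢
  linear_combination -4 * h

lemma add_one_mul_sum_odd_mul_legendreCoeff_mul (n i j : ℕ) :
    (i + j + 1) * ∑ k ∈ range n, (2 * k + 1) * (legendreCoeff k i * legendreCoeff k j)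
      = (n - i) * (n - j) * (legendreCoeff n i * legendreCoeff n j) := by
  induction n with
  | zero => simp
  | succ n ih =>
    rw [sum_range_succ, mul_add, ih]
    calc _ = ((n + 1 + i) * legendreCoeff n i) * ((n + 1 + j) * legendreCoeff n j) := ?_
      _ = _ := by
        rw [← sub_mul_legendreCoeff_succ_left, ← sub_mul_legendreCoeff_succ_left]; ring
    rcases lt_or_ge n i with hi | hi
    · simp [legendreCoeff_eq_zero_of_lt hi]
    rcases lt_or_ge n j with hj | hj
    · simp [legendreCoeff_eq_zero_of_lt hj]
    zify [hi, hj]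
    ring

lemma sub_mul_sub_mul_legendreCoeff_mul (n i j : ℕ) :
    (n - i) * (n - j) * (legendreCoeff n i * legendreCoeff n j)
      = (i + j + 1) * (n * ((n - 1).choose i * (n + j).choose j * (i + j).choose i
          * (n + i).choose (i + j + 1))) := by
  have h₁ : n * (n - 1).choose i = n.choose i * (n - i) := by
    cases n with
    | zero => simp
    | succ m => rw [Nat.add_sub_cancel, mul_comm, Nat.choose_mul_succ_eq]
  have h₂ := Nat.choose_mul_succ_eq (i + j) i
  rw [show i + j + 1 - i = j + 1 by omega] at h₂
  have h₃ := Nat.choose_mul (n := n + i) (k := i + j + 1) (s := i) (by omega)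
  rw [show n + i - i = n by omega, show i + j + 1 - i = j + 1 by omega] at h₃
  have h₄ := Nat.choose_succ_right_eq n j
  unfold legendreCoeff
  linear_combination
    (i + j + 1) * (n + j).choose j * (i + j).choose i * (n + i).choose (i + j + 1) * h₁.symm
    + (n - i) * n.choose i * (n + j).choose j * (n + i).choose (i + j + 1) * h₂.symm
    + (n - i) * n.choose i * (n + j).choose j * (j + 1) * h₃.symm
    + (n - i) * n.choose i * (n + j).choose j * (n + i).choose i * h₄.symm

lemma sum_odd_mul_legendreCoeff_mul (n i j : ℕ) :
    ∑ k ∈ range n, (2 * k + 1) * (legendreCoeff k i * legendreCoeff k j)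
      = n * ((n - 1).choose i * (n + j).choose j * (i + j).choose i
          * (n + i).choose (i + j + 1)) :=
  Nat.eq_of_mul_eq_mul_left (Nat.succ_pos _) <| by
    rw [add_one_mul_sum_odd_mul_legendreCoeff_mul, sub_mul_sub_mul_legendreCoeff_mul]

lemma dvd_sum_odd_pow_mul_legendreCoeff_mul (n r i j : ℕ) :
    n ∣ ∑ k ∈ range n,
      (2 * k + 1) ^ (2 * r + 1) * (legendreCoeff k i * legendreCoeff k j) := by
  induction r generalizing j with
  | zero => simpa using Dvd.intro _ (sum_odd_mul_legendreCoeff_mul n i j).symm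
  | succ r ih =>
    have h (k : ℕ) : (2 * k + 1) ^ (2 * (r + 1) + 1) * (legendreCoeff k i * legendreCoeff k j)
        = 4 * (j + 1) ^ 2
            * ((2 * k + 1) ^ (2 * r + 1) * (legendreCoeff k i * legendreCoeff k (j + 1)))
          + (2 * j + 1) ^ 2
            * ((2 * k + 1) ^ (2 * r + 1) * (legendreCoeff k i * legendreCoeff k j)) := by
      linear_combination
        (2 * k + 1) ^ (2 * r + 1) * legendreCoeff k i * odd_sq_mul_legendreCoeff k j
    rw [sum_congr rfl fun k _ => h k, sum_add_distrib, ← mul_sum, ← mul_sum]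
    exact dvd_add (dvd_mul_of_dvd_right (ih (j + 1)) _) (dvd_mul_of_dvd_right (ih j) _)

theorem stmt1_general (n : ℕ) (r : ℕ) :
    n ∣ ∑ k ∈ Finset.range n, (2 * k + 1) ^ (2 * r + 1) * apery k := by
  have h : ∀ k ∈ range n, (2 * k + 1) ^ (2 * r + 1) * apery k
      = ∑ i ∈ range n, (2 * k + 1) ^ (2 * r + 1) * (legendreCoeff k i * legendreCoeff k i) := by
    intro k hk
    simp only [apery_eq_sum_range_legendreCoeff_sq (mem_range.mp hk), mul_sum, sq]
  rw [sum_congr rfl h, sum_comm]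
  exact dvd_sum fun i _ => dvd_sum_odd_pow_mul_legendreCoeff_mul n r i i

theorem stmt1 (n : ℕ) (hn : 0 < n) (r : ℕ) :
    n ∣ ∑ k ∈ Finset.range n, (2 * k + 1) ^ (2 * r + 1) * apery k :=
  stmt1_general n r
end

section
/- For all positive integers n, nonnegative integers r, and ε ∈ {1, -1}, the sum over k from 0 to n-1 of ε^k·(2k+1)·k^r·(k+1)^r·D_k is divisible by n, where D_k is the k-th central Delannoy number. -/
def delannoy (n : ℕ) : ℕ :=
  ∑ k ∈ Finset.range (n + 1), Nat.choose (n + k) (2 * k) * Nat.choose (2 * k) k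

/-!
Write `D_k = ∑ⱼ a(k, j)` with `a(k, j) = C(k+j, j) C(k, j)`. Since
`k(k+1) a(k, j) = j(j+1) a(k, j) + (j+1)² a(k, j+1)`, multiplying by `k(k+1)` stays inside the
`ℤ`-span of the columns `k ↦ a(k, j)` with coefficients independent of `k`, so it suffices to
treat `r = 0` one column at a time. There both sums telescope: with
`T(n, j) = C(n+j, j) C(n, j+1)`, `∑_{k<n} (2k+1) a(k, j) = n T(n, j)` and
`∑_{k<n} (-1)^k (2k+1) a(k, j) = (-1)^(n+1) (j+1) T(n, j)`, where `(j+1) C(n, j+1) = n C(n-1, j)`.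
-/

open Finset

theorem Nat.choose_add_two_mul_mul_choose (k j : ℕ) :
    (k + j).choose (2 * j) * (2 * j).choose j = (k + j).choose j * k.choose j := by
  rcases le_or_gt j k with hjk | hkj
  · rw [Nat.choose_mul (by omega), Nat.add_sub_cancel, two_mul, Nat.add_sub_cancel]
  · simp [Nat.choose_eq_zero_of_lt hkj, Nat.choose_eq_zero_of_lt (by omega : k + j < 2 * j)]

theorem Int.natCast_choose_succ_right_mul (n j : ℕ) :
    (n.choose (j + 1) : ℤ) * (j + 1) = n.choose j * ((n : ℤ) - j) := by
  rcases le_or_gt j n with hjn | hnj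
  · have h := Nat.choose_succ_right_eq n j
    zify [hjn] at h
    exact h
  · simp [Nat.choose_eq_zero_of_lt hnj, Nat.choose_eq_zero_of_lt (Nat.lt_succ_of_lt hnj)]

theorem Int.natCast_add_one_mul_choose (n j : ℕ) :
    ((n : ℤ) + 1) * n.choose j = (n + 1).choose (j + 1) * ((j : ℤ) + 1) := by
  exact_mod_cast Nat.add_one_mul_choose_eq n j

def delannoyTerm (k j : ℕ) : ℕ := (k + j).choose j * k.choose j

theorem delannoy_eq_sum_delannoyTerm {n k : ℕ} (hk : k < n) :
    delannoy k = ∑ j ∈ range n, delannoyTerm k j := by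
  simp only [delannoy, Nat.choose_add_two_mul_mul_choose]
  refine sum_subset (range_subset_range.mpr hk) fun j _ hj => ?_
  rw [Nat.choose_eq_zero_of_lt (by simpa using hj : k < j), mul_zero]

theorem pronic_mul_delannoyTerm (k j : ℕ) :
    (k : ℤ) * (k + 1) * delannoyTerm k j =
      (j : ℤ) * (j + 1) * delannoyTerm k j + ((j : ℤ) + 1) ^ 2 * delannoyTerm k (j + 1) := by
  have h₁ := Int.natCast_add_one_mul_choose (k + j) j
  have h₂ := Int.natCast_choose_succ_right_mul k j
  push_cast [delannoyTerm, ← add_assoc] at *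
  linear_combination ((k.choose (j + 1) : ℤ) * (j + 1)) * h₁ -
    (((k : ℤ) + j + 1) * (k + j).choose j) * h₂

def delannoyTail (n j : ℕ) : ℕ := (n + j).choose j * n.choose (j + 1)

theorem succ_mul_delannoyTail_succ (n j : ℕ) :
    ((j : ℤ) + 1) * delannoyTail (n + 1) j = ((n : ℤ) + j + 1) * delannoyTerm n j := by
  have h₁ : ((n + j).choose j : ℤ) * (n + 1 + j) = (n + 1 + j).choose j * (n + 1) := by
    have h := Nat.choose_mul_succ_eq (n + j) j
    rw [show n + j + 1 - j = n + 1 by omega, show n + j + 1 = n + 1 + j by omega] at h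
    exact_mod_cast h
  have h₂ := Int.natCast_add_one_mul_choose n j
  push_cast [delannoyTerm, delannoyTail] at *
  linear_combination -(n.choose j : ℤ) * h₁ - ((n + 1 + j).choose j : ℤ) * h₂

theorem succ_mul_delannoyTail (n j : ℕ) :
    ((j : ℤ) + 1) * delannoyTail n j = ((n : ℤ) - j) * delannoyTerm n j := by
  have h := Int.natCast_choose_succ_right_mul n j
  push_cast [delannoyTerm, delannoyTail] at *
  linear_combination ((n + j).choose j : ℤ) * h

theorem sum_delannoyTerm (n j : ℕ) :
    ∑ k ∈ range n, (2 * (k : ℤ) + 1) * delannoyTerm k j = n * delannoyTail n j := by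
  induction n with
  | zero => simp
  | succ n ih =>
    rw [sum_range_succ, ih]
    refine mul_left_cancel₀ (by positivity : (j : ℤ) + 1 ≠ 0) ?_
    push_cast
    linear_combination (n : ℤ) * succ_mul_delannoyTail n j -
      ((n : ℤ) + 1) * succ_mul_delannoyTail_succ n j

theorem sum_neg_one_pow_mul_delannoyTerm (n j : ℕ) :
    ∑ k ∈ range n, (-1) ^ k * (2 * (k : ℤ) + 1) * delannoyTerm k j =
      (-1) ^ (n + 1) * ((j : ℤ) + 1) * delannoyTail n j := by
  induction n with
  | zero => simp [delannoyTail]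
  | succ n ih =>
    rw [sum_range_succ, ih]
    linear_combination
      (-1 : ℤ) ^ n * (-succ_mul_delannoyTail n j - succ_mul_delannoyTail_succ n j)

theorem dvd_succ_mul_delannoyTail (n j : ℕ) :
    (n : ℤ) ∣ ((j : ℤ) + 1) * delannoyTail n j := by
  cases n with
  | zero => simp [delannoyTail]
  | succ m =>
    refine ⟨((m + 1 + j).choose j : ℤ) * m.choose j, ?_⟩
    push_cast [delannoyTail]
    linear_combination -((m + 1 + j).choose j : ℤ) * Int.natCast_add_one_mul_choose m j

theorem dvd_sum_sign_mul_delannoyTerm (n j : ℕ) {ε : ℤ} (hε : ε = 1 ∨ ε = -1) :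
    (n : ℤ) ∣ ∑ k ∈ range n, ε ^ k * (2 * (k : ℤ) + 1) * delannoyTerm k j := by
  rcases hε with rfl | rfl
  · simp only [one_pow, one_mul, sum_delannoyTerm]
    exact dvd_mul_right _ _
  · rw [sum_neg_one_pow_mul_delannoyTerm, mul_assoc]
    exact (dvd_succ_mul_delannoyTail n j).mul_left _

theorem dvd_sum_pronic_pow_mul_delannoyTerm {n : ℕ} (w : ℕ → ℤ)
    (hw : ∀ j, (n : ℤ) ∣ ∑ k ∈ range n, w k * delannoyTerm k j) (r j : ℕ) :
    (n : ℤ) ∣ ∑ k ∈ range n, w k * ((k : ℤ) * (k + 1)) ^ r * delannoyTerm k j := by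
  induction r generalizing j with
  | zero => simpa using hw j
  | succ r ih =>
    have h : ∀ k, w k * ((k : ℤ) * (k + 1)) ^ (r + 1) * delannoyTerm k j =
        (j : ℤ) * (j + 1) * (w k * ((k : ℤ) * (k + 1)) ^ r * delannoyTerm k j) +
          ((j : ℤ) + 1) ^ 2 * (w k * ((k : ℤ) * (k + 1)) ^ r * delannoyTerm k (j + 1)) :=
      fun k => by linear_combination w k * ((k : ℤ) * (k + 1)) ^ r * pronic_mul_delannoyTerm k j
    simp only [h, sum_add_distrib, ← mul_sum]
    exact dvd_add ((ih j).mul_left _) ((ih (j + 1)).mul_left _)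

theorem stmt2_general (n : ℕ) (r : ℕ) (ε : ℤ) (hε : ε = 1 ∨ ε = -1) :
    (n : ℤ) ∣ ∑ k ∈ Finset.range n,
      ε ^ k * (2 * (k : ℤ) + 1) * (k : ℤ) ^ r * ((k : ℤ) + 1) ^ r * delannoy k := by
  have h : ∀ k ∈ range n,
      ε ^ k * (2 * (k : ℤ) + 1) * (k : ℤ) ^ r * ((k : ℤ) + 1) ^ r * delannoy k =
        ∑ j ∈ range n,
          ε ^ k * (2 * (k : ℤ) + 1) * ((k : ℤ) * (k + 1)) ^ r * delannoyTerm k j :=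
    fun k hk => by
      rw [delannoy_eq_sum_delannoyTerm (mem_range.mp hk), Nat.cast_sum, mul_sum, mul_pow]
      simp only [mul_assoc]
  rw [sum_congr rfl h, sum_comm]
  exact dvd_sum fun j _ => dvd_sum_pronic_pow_mul_delannoyTerm _
    (dvd_sum_sign_mul_delannoyTerm n · hε) r j

theorem stmt2 (n : ℕ) (hn : 0 < n) (r : ℕ) (ε : ℤ) (hε : ε = 1 ∨ ε = -1) :
    (n : ℤ) ∣ ∑ k ∈ Finset.range n,
      ε ^ k * (2 * (k : ℤ) + 1) * (k : ℤ) ^ r * ((k : ℤ) + 1) ^ r * delannoy k :=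
  stmt2_general n r ε hε
end

section
/- For every prime p > 3, the sum over k from 0 to p-1 of (2k+1)^3·A_k is congruent to p^3 modulo 2p^6, where A_k is the k-th Apéry number. -/
open Finset Nat

def cubeChooseSum (n j : ℕ) : ℕ :=
  ∑ k ∈ range n, (2 * k + 1) ^ 3 * (k + j).choose (2 * j) ^ 2

theorem sum_cube_mul_apery_eq (n : ℕ) :
    ∑ k ∈ range n, (2 * k + 1) ^ 3 * apery k =
      ∑ j ∈ range n, (2 * j).choose j ^ 2 * cubeChooseSum n j := by
  have extend : ∀ k ∈ range n, (2 * k + 1) ^ 3 * apery k =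
      ∑ j ∈ range n, (2 * k + 1) ^ 3 * ((k + j).choose (2 * j) ^ 2 * (2 * j).choose j ^ 2) := by
    intro k hk
    rw [apery, ← mul_sum]
    congr 1
    refine sum_subset (range_subset_range.mpr (mem_range.mp hk)) fun j _ hj => ?_
    rw [choose_eq_zero_of_lt (by simp at hj; omega)]
    ring
  simp_rw [sum_congr rfl extend, cubeChooseSum, mul_sum]
  rw [sum_comm]
  refine sum_congr rfl fun j _ => sum_congr rfl fun k _ => by ring

theorem succ_mul_cubeChooseSum (n j : ℕ) :
    ((j : ℤ) + 1) * cubeChooseSum n j =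
      (2 * j + 1) ^ 2 * (2 * n ^ 2 - j - 1) * ((n + j).choose (2 * j + 1) : ℤ) ^ 2 := by
  induction n with
  | zero => simp [cubeChooseSum, choose_eq_zero_of_lt (by omega : j < 2 * j + 1)]
  | succ n ih =>
    rw [cubeChooseSum, sum_range_succ, ← cubeChooseSum]
    push_cast
    rw [mul_add, ih, show n + 1 + j = n + j + 1 by ring, choose_succ_succ', Nat.cast_add]
    rcases lt_or_ge n j with h | h
    · rw [choose_eq_zero_of_lt (by omega : n + j < 2 * j),
        choose_eq_zero_of_lt (by omega : n + j < 2 * j + 1)]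
      ring
    · have step :
          ((n + j).choose (2 * j + 1) : ℤ) * (2 * j + 1) = (n + j).choose (2 * j) * (n - j) := by
        have := choose_succ_right_eq (n + j) (2 * j)
        rw [show n + j - 2 * j = n - j by omega] at this
        exact_mod_cast this
      linear_combination (-(2 * (2 * (j : ℤ) + 1) * (2 * n + 1) * (n + j).choose (2 * j + 1)
        + (2 * (2 * j + 1) * (2 * (n + 1) ^ 2 - j - 1) + 2 * (n - j) * (2 * n + 1))
          * (n + j).choose (2 * j))) * step

theorem choose_mul_factorial_eq_prod (n j : ℕ) :
    ((n + j).choose (2 * j + 1) * (2 * j + 1)! : ℤ) =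
      n * ∏ i ∈ range j, ((n : ℤ) ^ 2 - (i + 1) ^ 2) := by
  rw [← Nat.cast_mul, mul_comm, ← descFactorial_eq_factorial_mul_choose]
  induction j with
  | zero => simp
  | succ j ih =>
    rw [prod_range_succ, ← mul_assoc, ← ih, show n + (j + 1) = n + j + 1 by ring,
      show 2 * (j + 1) + 1 = 2 * j + 1 + 1 + 1 by ring, succ_descFactorial_succ, descFactorial_succ]
    rcases lt_or_ge j n with h | h
    · push_cast [show 2 * j + 1 ≤ n + j by omega]
      ring
    · rw [descFactorial_eq_zero_iff_lt.mpr (by omega)]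
      simp

theorem succ_mul_factorial_pow_mul_eq (n j : ℕ) :
    ((j : ℤ) + 1) * (j ! : ℤ) ^ 4 * ((2 * j).choose j ^ 2 * cubeChooseSum n j : ℕ) =
      (2 * n ^ 2 - (j + 1)) * n ^ 2 * (∏ i ∈ range j, ((n : ℤ) ^ 2 - (i + 1) ^ 2)) ^ 2 := by
  have central : ((2 * j).choose j * (2 * j + 1) * j ! ^ 2 : ℤ) = (2 * j + 1)! := by
    have := choose_mul_factorial_mul_factorial (show j ≤ 2 * j by omega)
    rw [show 2 * j - j = j by omega] at this
    rw [factorial_succ, ← this]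
    push_cast
    ring
  set A : ℤ := (((n + j).choose (2 * j + 1) : ℕ) : ℤ)
  set C : ℤ := (((2 * j).choose j : ℕ) : ℤ)
  push_cast
  linear_combination (j ! : ℤ) ^ 4 * C ^ 2 * succ_mul_cubeChooseSum n j
    + (2 * n ^ 2 - j - 1) * A ^ 2 * (C * (2 * j + 1) * j ! ^ 2 + (2 * j + 1)!) * central
    + (2 * n ^ 2 - j - 1)
      * (A * (2 * j + 1)! + n * ∏ i ∈ range j, ((n : ℤ) ^ 2 - (i + 1) ^ 2))
      * choose_mul_factorial_eq_prod n j

theorem sum_range_succ_mul_add_sum_range {R : Type*} [CommSemiring R] (a : ℕ → R) (m : ℕ) :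
    ∑ j ∈ range m, (((j : R) + 1) * a j + ∑ i ∈ range j, a i) = m * ∑ i ∈ range m, a i := by
  induction m with
  | zero => simp
  | succ m ih =>
    rw [sum_range_succ, ih, sum_range_succ]
    push_cast
    ring

section CommRing

variable {R : Type*} [CommRing R]

theorem mul_prod_one_sub_mul_sq {x : R} (hx : x ^ 3 = 0) (a : ℕ → R) (m : ℕ) :
    x * (∏ i ∈ range m, (1 - x * a i)) ^ 2 = x * (1 - 2 * x * ∑ i ∈ range m, a i) := by
  induction m with
  | zero => simp
  | succ m ih =>
    rw [prod_range_succ, sum_range_succ, mul_pow, ← mul_assoc, ih]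
    linear_combination (a m ^ 2 + 4 * a m * ∑ i ∈ range m, a i
      - 2 * x * a m ^ 2 * ∑ i ∈ range m, a i) * hx

theorem factorial_sq_mul_prod_eq_one {a : ℕ → R} {j : ℕ}
    (ha : ∀ i < j, ((i : R) + 1) ^ 2 * a i = 1) :
    (j ! : R) ^ 2 * ∏ i ∈ range j, a i = 1 := by
  rw [← prod_range_add_one_eq_factorial, Nat.cast_prod, ← prod_pow, ← prod_mul_distrib]
  exact prod_eq_one fun i hi => by push_cast; exact ha i (mem_range.mp hi)

theorem prod_sq_sub_sq_sq_eq {a : ℕ → R} {j : ℕ} (ha : ∀ i < j, ((i : R) + 1) ^ 2 * a i = 1)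
    (x : R) :
    (∏ i ∈ range j, (x ^ 2 - ((i : R) + 1) ^ 2)) ^ 2 =
      (j ! : R) ^ 4 * (∏ i ∈ range j, (1 - x ^ 2 * a i)) ^ 2 := by
  rw [← prod_range_add_one_eq_factorial, Nat.cast_prod, ← prod_pow, ← prod_pow, ← prod_pow,
    ← prod_mul_distrib]
  refine prod_congr rfl fun i hi => ?_
  push_cast
  linear_combination (x ^ 2 * (2 * ((i : R) + 1) ^ 2 - x ^ 2 - x ^ 2 * ((i : R) + 1) ^ 2 * a i))
    * ha i (mem_range.mp hi)

theorem eq_of_factorial_pow_mul_eq {n j : ℕ} (hn : (n : R) ^ 6 = 0) {a : ℕ → R}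
    (ha : ∀ i < j, ((i : R) + 1) ^ 2 * a i = 1) {t c : R}
    (h : (j ! : R) ^ 4 * t = c * n ^ 2 * (∏ i ∈ range j, ((n : R) ^ 2 - (i + 1) ^ 2)) ^ 2) :
    t = c * n ^ 2 * (1 - 2 * n ^ 2 * ∑ i ∈ range j, a i) := by
  have hsq := mul_prod_one_sub_mul_sq (x := (n : R) ^ 2) (by rw [← pow_mul]; exact hn) a j
  rw [prod_sq_sub_sq_sq_eq ha] at h
  set P := ∏ i ∈ range j, a i
  set Y := ∏ i ∈ range j, (1 - (n : R) ^ 2 * a i)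
  linear_combination P ^ 2 * h - ((j ! : R) ^ 2 * P + 1) * (t - c * n ^ 2 * Y ^ 2)
    * factorial_sq_mul_prod_eq_one ha + c * hsq

theorem cast_choose_sq_mul_cubeChooseSum {n j : ℕ} (hn : (n : R) ^ 6 = 0) {a : ℕ → R}
    (ha : ∀ i ≤ j, ((i : R) + 1) ^ 2 * a i = 1) :
    (((2 * j).choose j ^ 2 * cubeChooseSum n j : ℕ) : R) =
      -n ^ 2 + 2 * n ^ 4 * ((j + 1) * a j + ∑ i ∈ range j, a i) := by
  have key := congrArg (Int.cast : ℤ → R) (succ_mul_factorial_pow_mul_eq n j)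
  push_cast at key
  have cancel := eq_of_factorial_pow_mul_eq hn (fun i hi => ha i hi.le)
    (t := ((j : R) + 1) * (((2 * j).choose j ^ 2 * cubeChooseSum n j : ℕ) : R))
    (c := 2 * n ^ 2 - (j + 1))
    (by push_cast; linear_combination key)
  -- `(j + 1) * a j` inverts `j + 1`
  linear_combination ((j : R) + 1) * a j * cancel
    - ((((2 * j).choose j ^ 2 * cubeChooseSum n j : ℕ) : R) + n ^ 2
      - 2 * n ^ 4 * ∑ i ∈ range j, a i) * ha j le_rfl
    - 4 * ((j : R) + 1) * a j * (∑ i ∈ range j, a i) * hn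

theorem cast_choose_sq_mul_cubeChooseSum_of_succ_eq {n j : ℕ} (hj : j + 1 = n)
    (hn : (n : R) ^ 6 = 0) {a : ℕ → R} (ha : ∀ i < j, ((i : R) + 1) ^ 2 * a i = 1) :
    (((2 * j).choose j ^ 2 * cubeChooseSum n j : ℕ) : R) =
      (2 * n - 1) * n ^ 2 * (1 - 2 * n ^ 2 * ∑ i ∈ range j, a i) := by
  have key : (j ! : ℤ) ^ 4 * ((2 * j).choose j ^ 2 * cubeChooseSum n j : ℕ) =
      (2 * n - 1) * n ^ 2 * (∏ i ∈ range j, ((n : ℤ) ^ 2 - (i + 1) ^ 2)) ^ 2 := by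
    refine mul_left_cancel₀ (show (n : ℤ) ≠ 0 by omega) ?_
    have hjn : (j : ℤ) + 1 = n := by exact_mod_cast hj
    linear_combination succ_mul_factorial_pow_mul_eq n j
      - ((j ! : ℤ) ^ 4 * ((2 * j).choose j ^ 2 * cubeChooseSum n j : ℕ)
        + n ^ 2 * (∏ i ∈ range j, ((n : ℤ) ^ 2 - (i + 1) ^ 2)) ^ 2) * hjn
  refine eq_of_factorial_pow_mul_eq hn ha ?_
  exact_mod_cast congrArg (Int.cast : ℤ → R) key

end CommRing

theorem ZMod.sum_range_natCast {M : Type*} [AddCommMonoid M] (n : ℕ) [NeZero n]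
    (f : ZMod n → M) :
    ∑ i ∈ range n, f i = ∑ x, f x := by
  refine sum_nbij' (fun i => (i : ZMod n)) ZMod.val (fun _ _ => mem_univ _)
    (fun x _ => mem_range.mpr (ZMod.val_lt x)) (fun i hi => ZMod.val_cast_of_lt (mem_range.mp hi))
    (fun x _ => ZMod.natCast_zmod_val x) fun _ _ => rfl

theorem ZMod.sum_range_inv_sq_eq_zero {p : ℕ} [Fact p.Prime] (hp : 3 < p) :
    ∑ i ∈ range (p - 1), ((i + 1 : ZMod p)⁻¹) ^ 2 = 0 := by
  have h := sum_range_succ' (fun i => ((i : ZMod p)⁻¹) ^ 2) (p - 1)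
  have inv_perm : ∑ x : ZMod p, x⁻¹ ^ 2 = ∑ x : ZMod p, x ^ 2 :=
    Equiv.sum_comp (Equiv.inv _) (· ^ 2)
  rw [Nat.sub_add_cancel (by omega), ZMod.sum_range_natCast p fun x => x⁻¹ ^ 2, inv_perm,
    FiniteField.sum_pow_lt_card_sub_one (K := ZMod p) 2 (by rw [ZMod.card]; omega)] at h
  push_cast at h
  simpa using h.symm

theorem ZMod.pow_mul_eq_zero_of_castHom_eq_zero {p : ℕ} [NeZero p] (k : ℕ)
    {y : ZMod (p ^ (k + 1))}
    (hy : ZMod.castHom (dvd_pow_self p k.succ_ne_zero) (ZMod p) y = 0) :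
    (p : ZMod (p ^ (k + 1))) ^ k * y = 0 := by
  rw [← ZMod.natCast_zmod_val y, map_natCast, ZMod.natCast_eq_zero_iff] at hy
  rw [← ZMod.natCast_zmod_val y]
  obtain ⟨m, hm⟩ := hy
  rw [hm, Nat.cast_mul, ← mul_assoc, ← pow_succ, ← Nat.cast_pow, ZMod.natCast_self, zero_mul]

theorem ZMod.pow_mul_sum_eq_zero_of_sq_mul_eq_one {p : ℕ} [Fact p.Prime] (hp : 3 < p) (k : ℕ)
    {a : ℕ → ZMod (p ^ (k + 1))}
    (ha : ∀ i < p - 1, ((i : ZMod (p ^ (k + 1))) + 1) ^ 2 * a i = 1) :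
    (p : ZMod (p ^ (k + 1))) ^ k * ∑ i ∈ range (p - 1), a i = 0 := by
  refine ZMod.pow_mul_eq_zero_of_castHom_eq_zero k ?_
  rw [map_sum, ← ZMod.sum_range_inv_sq_eq_zero hp]
  refine sum_congr rfl fun i hi => ?_
  have := congrArg (ZMod.castHom (dvd_pow_self p k.succ_ne_zero) (ZMod p))
    (ha i (mem_range.mp hi))
  rw [map_mul, map_one, map_pow, map_add, map_natCast, map_one] at this
  rw [inv_pow]
  exact eq_inv_of_mul_eq_one_right this

theorem sum_cube_mul_apery_modEq_pow_six {p : ℕ} (hp : p.Prime) (hp3 : 3 < p) :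
    ∑ k ∈ range p, (2 * k + 1) ^ 3 * apery k ≡ p ^ 3 [MOD p ^ 6] := by
  have := Fact.mk hp
  set R := ZMod (p ^ 6)
  have hp6 : (p : R) ^ 6 = 0 := by exact_mod_cast ZMod.natCast_self (p ^ 6)
  set a : ℕ → R := fun i => ((i + 1 : R)⁻¹) ^ 2
  have ha : ∀ i < p - 1, ((i : R) + 1) ^ 2 * a i = 1 := fun i hi => by
    have hcop := ((Nat.coprime_of_lt_prime (by omega) (by omega) hp).symm.pow_right 6 :
      Nat.Coprime (i + 1) (p ^ 6))
    have := ZMod.coe_mul_inv_eq_one (i + 1) hcop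
    push_cast at this
    rw [← mul_pow, this, one_pow]
  have hH := ZMod.pow_mul_sum_eq_zero_of_sq_mul_eq_one hp3 5 ha
  rw [← ZMod.natCast_eq_natCast_iff, sum_cube_mul_apery_eq, Nat.cast_sum,
    show range p = range (p - 1 + 1) by rw [Nat.sub_add_cancel hp.one_le], sum_range_succ,
    sum_congr rfl fun j hj =>
      cast_choose_sq_mul_cubeChooseSum hp6 fun i hi => ha i (by simp at hj; omega),
    cast_choose_sq_mul_cubeChooseSum_of_succ_eq (Nat.sub_add_cancel hp.one_le) hp6 ha,
    sum_add_distrib, sum_const, card_range, nsmul_eq_mul, ← mul_sum,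
    sum_range_succ_mul_add_sum_range, Nat.cast_pred hp.pos,
    Nat.cast_pow]
  linear_combination (-2 : R) * hH

theorem cast_apery_zmod_two (n : ℕ) : (apery n : ZMod 2) = 1 := by
  rw [apery, Nat.cast_sum, sum_range_succ', sum_eq_zero fun k _ => ?_]
  · simp
  · have := two_dvd_centralBinom_succ k
    rw [centralBinom_eq_two_mul_choose] at this
    simp [(ZMod.natCast_eq_zero_iff _ 2).mpr this]

theorem sum_cube_mul_apery_modEq_two (n : ℕ) :
    ∑ k ∈ range n, (2 * k + 1) ^ 3 * apery k ≡ n ^ 3 [MOD 2] := by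
  rw [← ZMod.natCast_eq_natCast_iff]
  push_cast
  simp only [cast_apery_zmod_two, show (2 : ZMod 2) = 0 from rfl]
  simp only [zero_mul, zero_add, one_pow, mul_one, sum_const, card_range, nsmul_eq_mul]
  linear_combination (-(n : ZMod 2) - 1) * ZMod.pow_card (p := 2) (n : ZMod 2)

theorem stmt5 (p : ℕ) (hp : p.Prime) (hp3 : 3 < p) :
    (∑ k ∈ Finset.range p, (2 * k + 1) ^ 3 * apery k) ≡ p ^ 3 [MOD 2 * p ^ 6] := by
  have hcop : Nat.Coprime 2 (p ^ 6) :=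
    ((Nat.coprime_primes prime_two hp).mpr (by omega)).pow_right 6
  exact (Nat.modEq_and_modEq_iff_modEq_mul hcop).mp
    ⟨sum_cube_mul_apery_modEq_two p, sum_cube_mul_apery_modEq_pow_six hp hp3⟩
end

section
/- For every positive integer n, the sum over k from 0 to n-1 of C(n+k, k)^2·C(n-1, k)^2 is divisible by n. -/
/-!
Write `t(N, k) = C(N+k, k) C(N-1, k)`, so that `(k+1)² t(N, k+1) = (N² - (k+1)²) t(N, k)`.
Let `N = p m` with `p` prime and `p^e ∣ N`. Modulo `p^e` the ratio `(N² - (k+1)²)/(k+1)²` is `-1`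
when `p ∤ k+1`, while for `k+1 = p(j+1)` it equals `(m² - (j+1)²)/(j+1)²`, the ratio in the
recurrence for `t(m, ·)`. Hence `t(pm, k)² ≡ t(m, ⌊k/p⌋)² [mod p^e]`, so `S(N) = ∑_{k<N} t(N,k)²`
satisfies `S(pm) ≡ p S(m) [mod p^e]`, and `n ∣ S(n)` follows by strong induction on `n`, one prime
power at a time.
-/

open Finset

namespace BinomialSquareSum

def term (N k : ℕ) : ℤ := (N + k).choose k * (N - 1).choose k

@[simp] theorem term_zero (N : ℕ) : term N 0 = 1 := by simp [term]

theorem sq_mul_term_succ {N k : ℕ} (hk : k < N) :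
    ((k : ℤ) + 1) ^ 2 * term N (k + 1) = ((N : ℤ) ^ 2 - ((k : ℤ) + 1) ^ 2) * term N k := by
  have h₁ : ((N + k + 1 : ℕ) : ℤ) * (N + k).choose k = (N + k + 1).choose (k + 1) * (k + 1) := by
    exact_mod_cast Nat.add_one_mul_choose_eq (N + k) k
  have h₂ : ((N - 1).choose (k + 1) : ℤ) * (k + 1) = (N - 1).choose k * ((N - 1 - k : ℕ) : ℤ) := by
    exact_mod_cast Nat.choose_succ_right_eq (N - 1) k
  rw [show ((N - 1 - k : ℕ) : ℤ) = N - 1 - k by omega] at h₂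
  push_cast at h₁
  rw [term, term, ← add_assoc]
  linear_combination -((k : ℤ) + 1) * ((N - 1).choose (k + 1) : ℤ) * h₁ +
    ((N : ℤ) + k + 1) * ((N + k).choose k : ℤ) * h₂

theorem sum_range_mul_comp_div {M : Type*} [AddCommMonoid M] (f : ℕ → M) (p m : ℕ) :
    ∑ k ∈ range (p * m), f (k / p) = p • ∑ j ∈ range m, f j := by
  rcases p.eq_zero_or_pos with rfl | hp
  · simp
  induction m with
  | zero => simp
  | succ m ih =>
    have hdiv : ∀ r ∈ range p, f ((p * m + r) / p) = f m := fun r hr => by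
      rw [Nat.mul_add_div hp, Nat.div_eq_of_lt (mem_range.mp hr), add_zero]
    rw [Nat.mul_succ, sum_range_add, ih, sum_congr rfl hdiv, sum_range_succ, smul_add,
      sum_const, card_range]

theorem sq_mul_term_mul_succ {p m j : ℕ} (hp : 0 < p) (hj : j < m) :
    ((j : ℤ) + 1) ^ 2 * term (p * m) (p * (j + 1))
      = ((m : ℤ) ^ 2 - ((j : ℤ) + 1) ^ 2) * term (p * m) (p * (j + 1) - 1) := by
  have hpj : 0 < p * (j + 1) := by positivity
  have hle : p * (j + 1) ≤ p * m := Nat.mul_le_mul_left p hj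
  have h := sq_mul_term_succ (N := p * m) (k := p * (j + 1) - 1) (by omega)
  rw [Nat.sub_add_cancel hpj, Nat.cast_sub hpj] at h
  push_cast at h
  have hp2 : (p : ℤ) ^ 2 ≠ 0 := by positivity
  exact mul_left_cancel₀ hp2 (by linear_combination h)

/-- Unlike a congruence `x ≡ ± y [ZMOD M]`, this survives cancelling a common factor of `x` and `y`
that is not a unit modulo `M`. -/
def CrossSqModEq (M x y : ℤ) : Prop :=
  ∃ A B : ℤ, IsCoprime A M ∧ A ^ 2 ≡ B ^ 2 [ZMOD M] ∧ A * x = B * y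

namespace CrossSqModEq

variable {M x y : ℤ}

theorem refl (M x : ℤ) : CrossSqModEq M x x := ⟨1, 1, isCoprime_one_left, rfl, rfl⟩

theorem sq_modEq (h : CrossSqModEq M x y) : x ^ 2 ≡ y ^ 2 [ZMOD M] := by
  obtain ⟨A, B, hA, hAB, hxy⟩ := h
  have hmul : A ^ 2 * x ^ 2 ≡ A ^ 2 * y ^ 2 [ZMOD M] :=
    calc A ^ 2 * x ^ 2 = B ^ 2 * y ^ 2 := by rw [← mul_pow, hxy, mul_pow]
      _ ≡ A ^ 2 * y ^ 2 [ZMOD M] := hAB.symm.mul_right _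
  refine (Int.modEq_iff_dvd.mpr ?_).symm
  refine (hA.pow_left (m := 2)).symm.dvd_of_dvd_mul_left ?_
  rw [mul_sub]
  exact Int.modEq_iff_dvd.mp hmul.symm

theorem of_mul_eq_mul_left {x' c d : ℤ} (h : CrossSqModEq M x y) (hc : IsCoprime c M)
    (hcd : c ^ 2 ≡ d ^ 2 [ZMOD M]) (hx : c * x' = d * x) : CrossSqModEq M x' y := by
  obtain ⟨A, B, hA, hAB, hxy⟩ := h
  refine ⟨A * c, B * d, hA.mul_left hc, by simpa only [mul_pow] using hAB.mul hcd, ?_⟩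
  linear_combination A * hx + d * hxy

theorem of_mul_eq_mul {x' y' c d : ℤ} (h : CrossSqModEq M x y) (hc : c ≠ 0)
    (hx : c * x' = d * x) (hy : c * y' = d * y) : CrossSqModEq M x' y' := by
  obtain ⟨A, B, hA, hAB, hxy⟩ := h
  refine ⟨A, B, hA, hAB, mul_left_cancel₀ hc ?_⟩
  linear_combination A * hx + d * hxy - B * hy

end CrossSqModEq

section PrimePower

variable {p m e : ℕ} (hp : p.Prime) (he : p ^ e ∣ p * m)
include hp he

theorem crossSqModEq_term_term_div :
    ∀ k < p * m, CrossSqModEq (p ^ e) (term (p * m) k) (term m (k / p)) := by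
  intro k
  induction k with
  | zero => exact fun _ => by simpa using CrossSqModEq.refl _ 1
  | succ k ih =>
    intro hk
    have ih := ih (by omega)
    by_cases hdvd : p ∣ k + 1
    · obtain ⟨j, hj⟩ : ∃ j, k + 1 = p * (j + 1) := by
        obtain ⟨l, hl⟩ := hdvd
        exact ⟨l - 1, by rcases l with _ | l <;> simp_all⟩
      have hkj : k / p = j := by
        have := hp.pos
        refine Nat.div_eq_of_lt_le ?_ ?_ <;> rw [Nat.mul_succ] at hj <;> nlinarith
      have hjm : j < m := by
        have := Nat.lt_of_mul_lt_mul_left (hj ▸ hk : p * (j + 1) < p * m)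
        omega
      have hN := sq_mul_term_mul_succ hp.pos hjm
      rw [← hj, Nat.add_sub_cancel] at hN
      rw [show (k + 1) / p = j + 1 by rw [hj, Nat.mul_div_cancel_left _ hp.pos]]
      rw [hkj] at ih
      exact ih.of_mul_eq_mul (by positivity) hN (sq_mul_term_succ hjm)
    · have hN : ((p * m : ℕ) : ℤ) ≡ 0 [ZMOD p ^ e] := by
        exact_mod_cast (Int.natCast_dvd_natCast.mpr he).modEq_zero_int
      have hcop : IsCoprime (((k : ℤ) + 1) ^ 2) ((p : ℤ) ^ e) := by
        refine IsCoprime.pow ?_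
        exact_mod_cast Nat.isCoprime_iff_coprime.mpr
          (Nat.coprime_comm.mp ((hp.coprime_iff_not_dvd).mpr hdvd))
      have hsq : (((k : ℤ) + 1) ^ 2) ^ 2
          ≡ (((p * m : ℕ) : ℤ) ^ 2 - ((k : ℤ) + 1) ^ 2) ^ 2 [ZMOD p ^ e] := by
        simpa using (((hN.pow 2).sub_right (((k : ℤ) + 1) ^ 2)).pow 2).symm
      rw [Nat.succ_div_of_not_dvd hdvd]
      exact ih.of_mul_eq_mul_left hcop hsq (by exact_mod_cast sq_mul_term_succ (by omega))

theorem sum_sq_term_modEq :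
    ∑ k ∈ range (p * m), term (p * m) k ^ 2 ≡ p * ∑ j ∈ range m, term m j ^ 2 [ZMOD p ^ e] := by
  rw [← nsmul_eq_mul, ← sum_range_mul_comp_div (fun j => term m j ^ 2)]
  exact Int.ModEq.sum fun k hk =>
    (crossSqModEq_term_term_div hp he k (mem_range.mp hk)).sq_modEq

end PrimePower

theorem natCast_dvd_sum_sq_term (n : ℕ) : (n : ℤ) ∣ ∑ k ∈ range n, term n k ^ 2 := by
  induction n using Nat.strong_induction_on with
  | _ n ih =>
    obtain rfl | hn := n.eq_zero_or_pos
    · simp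
    refine Int.natCast_dvd.mpr ((Nat.dvd_iff_prime_pow_dvd_dvd _ n).mpr fun p e hp he => ?_)
    obtain rfl | he0 := e.eq_zero_or_pos
    · simp
    obtain ⟨m, rfl⟩ := (dvd_pow_self p he0.ne').trans he
    have hm : 0 < m := Nat.pos_of_mul_pos_left hn
    have hpe : p ^ e = p * p ^ (e - 1) := by rw [← pow_succ', Nat.sub_add_cancel he0]
    have hdvd_m : p ^ (e - 1) ∣ m := (Nat.mul_dvd_mul_iff_left hp.pos).mp (hpe ▸ he)
    have hdvd_rhs : (p : ℤ) ^ e ∣ p * ∑ j ∈ range m, term m j ^ 2 := by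
      rw [show (p : ℤ) ^ e = p * p ^ (e - 1) by exact_mod_cast hpe]
      exact mul_dvd_mul_left _ ((Int.natCast_dvd_natCast.mpr hdvd_m).trans
        (ih m (lt_mul_left hm hp.one_lt)))
    exact Int.natCast_dvd.mp (by exact_mod_cast ((sum_sq_term_modEq hp he).dvd_iff.mpr hdvd_rhs))

end BinomialSquareSum

theorem stmt6_general (n : ℕ) :
    n ∣ ∑ k ∈ Finset.range n, (Nat.choose (n + k) k) ^ 2 * (Nat.choose (n - 1) k) ^ 2 := by
  have h := BinomialSquareSum.natCast_dvd_sum_sq_term n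
  simp only [BinomialSquareSum.term, mul_pow] at h
  exact_mod_cast h

theorem stmt6 (n : ℕ) (hn : 0 < n) :
    n ∣ ∑ k ∈ Finset.range n, (Nat.choose (n + k) k) ^ 2 * (Nat.choose (n - 1) k) ^ 2 :=
  stmt6_general n
end

section
/- Let a_1,...,a_m, b_1,...,b_m be nonnegative integers and n a positive integer. Then the sum over k from 0 to n-1 of C(n-1, k)^2 · ∏_{i=1}^m C(a_i+k, b_i+k) is divisible by gcd(a_1,...,a_m, b_1,...,b_m, n). -/
/-! Let `d` be the gcd and `F k = ∏ C(aᵢ + k, bᵢ + k)`. From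
`(k + 1) (C(a + k + 1, b + k + 1) - C(a + k, b + k)) = a C(a + k, b + k) - b C(a + k + 1, b + k + 1)`
and the product rule, `d ∣ (k + 1) ΔF(k)`, hence `d ∣ u Δᵘ F(0)` for all `u`. Newton's expansion
`F k = ∑ᵤ C(k, u) Δᵘ F(0)` turns the sum into `∑ᵤ C(N, u) C(2N - u, N - u) Δᵘ F(0)` with
`N = n - 1`, and `gcd(n, u)` divides `C(2N - u, N - u)`. So each term is divisible by
`gcd(d, u) Δᵘ F(0)`, which `d` divides. -/

open Finset fwdDiff

lemma sum_choose_sq_mul_choose (N u : ℕ) :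
    ∑ k ∈ range (N + 1), N.choose k ^ 2 * k.choose u
      = N.choose u * (2 * N - u).choose (N - u) := by
  rcases lt_or_ge N u with hNu | huN
  · rw [Nat.choose_eq_zero_of_lt hNu, zero_mul]
    exact sum_eq_zero fun k hk => by
      rw [Nat.choose_eq_zero_of_lt (n := k) (by grind), mul_zero]
  obtain ⟨M, rfl⟩ := Nat.exists_eq_add_of_le huN
  have hvandermonde : (2 * (u + M) - u).choose (u + M - u)
      = ∑ j ∈ range (M + 1), M.choose j * (u + M).choose (M - j) := by
    rw [show 2 * (u + M) - u = M + (u + M) by omega, show u + M - u = M by omega,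
      Nat.add_choose_eq, Nat.sum_antidiagonal_eq_sum_range_succ_mk]
  rw [hvandermonde, mul_sum, range_eq_Ico, ← sum_Ico_consecutive _ (Nat.zero_le u) (by omega),
    sum_eq_zero fun k hk => by rw [Nat.choose_eq_zero_of_lt (mem_Ico.1 hk).2, mul_zero],
    zero_add, sum_Ico_eq_sum_range, show u + M + 1 - u = M + 1 by omega]
  refine sum_congr rfl fun j hj => ?_
  have hchoose := Nat.choose_mul (n := u + M) (k := u + j) (s := u) (by grind)
  rw [Nat.add_sub_cancel_left, Nat.add_sub_cancel_left] at hchoose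
  rw [sq, mul_assoc, hchoose, Nat.choose_symm_of_eq_add (show u + M = (u + j) + (M - j) by grind)]
  ring

lemma dvd_choose_of_dvd_add_one_of_dvd {g N u : ℕ} (hN : g ∣ N + 1) (hu : g ∣ u) (huN : u ≤ N) :
    g ∣ (2 * N - u).choose (N - u) := by
  set M := 2 * N - u
  have hcop : g.Coprime (M + 1) := by
    refine Nat.Coprime.coprime_dvd_left ?_ (by simp : (M + 1 + 1).Coprime (M + 1))
    have : M + 1 + 1 + u = 2 * (N + 1) := by omega
    exact (Nat.dvd_add_left hu).1 (this ▸ hN.mul_left 2)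
  rw [Nat.choose_symm_of_eq_add (show M = (N - u) + N by omega)]
  refine hcop.dvd_of_dvd_mul_left ?_
  rw [Nat.add_one_mul_choose_eq]
  exact hN.mul_left _

section
variable {R : Type*} [CommRing R]

lemma dvd_succ_mul_fwdDiff_prod {ι : Type*} (s : Finset ι) (f : ι → ℕ → R) (d : R)
    (h : ∀ i ∈ s, ∀ t : ℕ, d ∣ ((t : R) + 1) * Δ_[1] (f i) t) (t : ℕ) :
    d ∣ ((t : R) + 1) * Δ_[1] (∏ i ∈ s, f i) t := by
  revert t
  refine prod_induction _ (fun F => ∀ t : ℕ, d ∣ ((t : R) + 1) * Δ_[1] F t) ?_ ?_ h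
  · intro F G hF hG t
    have : ((t : R) + 1) * Δ_[1] (F * G) t
        = F (t + 1) * (((t : R) + 1) * Δ_[1] G t) + G t * (((t : R) + 1) * Δ_[1] F t) := by
      simp only [fwdDiff, Pi.mul_apply]; ring
    rw [this]
    exact dvd_add ((hG t).mul_left _) ((hF t).mul_left _)
  · intro t
    simp [fwdDiff]

lemma dvd_mul_fwdDiff_iter_zero (F : ℕ → R) (d : R)
    (h : ∀ t : ℕ, d ∣ ((t : R) + 1) * Δ_[1] F t) (u : ℕ) :
    d ∣ (u : R) * (Δ_[1])^[u] F 0 := by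
  obtain _ | v := u
  · simp
  rw [Function.iterate_succ_apply, fwdDiff_iter_eq_sum_shift, mul_sum]
  refine dvd_sum fun t _ => ?_
  have hchoose : ((v : R) + 1) * v.choose t = (v + 1).choose (t + 1) * ((t : R) + 1) := by
    exact_mod_cast congrArg (Nat.cast (R := R)) (Nat.add_one_mul_choose_eq v t)
  have : ((v + 1 : ℕ) : R) * (((-1 : ℤ) ^ (v - t) * v.choose t) • Δ_[1] F (0 + t • 1))
      = ((-1) ^ (v - t) * (v + 1).choose (t + 1)) * (((t : R) + 1) * Δ_[1] F t) := by
    simp only [zero_add, smul_eq_mul, mul_one, zsmul_eq_mul]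
    push_cast
    linear_combination ((-1 : R) ^ (v - t) * Δ_[1] F t) * hchoose
  rw [this]
  exact (h t).mul_left _

lemma sum_choose_sq_mul_eq_sum_fwdDiff_iter (F : ℕ → R) (N : ℕ) :
    ∑ k ∈ range (N + 1), (N.choose k : R) ^ 2 * F k
      = ∑ u ∈ range (N + 1), ((N.choose u * (2 * N - u).choose (N - u) : ℕ) : R) *
          (Δ_[1])^[u] F 0 := by
  have hnewton : ∀ k ∈ range (N + 1),
      F k = ∑ u ∈ range (N + 1), (k.choose u : R) * (Δ_[1])^[u] F 0 := by
    intro k hk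
    have h := shift_eq_sum_fwdDiff_iter 1 F k 0
    simp only [zero_add, smul_eq_mul, mul_one, nsmul_eq_mul] at h
    rw [h]
    refine sum_subset (range_subset_range.2 (by grind)) fun u _ hu => ?_
    rw [Nat.choose_eq_zero_of_lt (by grind), Nat.cast_zero, zero_mul]
  simp_rw [← sum_choose_sq_mul_choose, Nat.cast_sum, sum_mul]
  rw [sum_congr rfl fun k hk => by rw [hnewton k hk, mul_sum], sum_comm]
  push_cast
  simp only [mul_assoc]

end

lemma succ_mul_fwdDiff_choose_add (a b t : ℕ) :
    ((t : ℤ) + 1) * Δ_[1] (fun k => ((a + k).choose (b + k) : ℤ)) t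
      = a * (a + t).choose (b + t) - b * (a + (t + 1)).choose (b + (t + 1)) := by
  have h := congrArg (Nat.cast : ℕ → ℤ) (Nat.add_one_mul_choose_eq (a + t) (b + t))
  push_cast at h
  simp only [fwdDiff, ← add_assoc]
  linear_combination -h

lemma dvd_succ_mul_fwdDiff_prod_choose_add {ι : Type*} (s : Finset ι) (a b : ι → ℕ) (d : ℤ)
    (ha : ∀ i ∈ s, d ∣ a i) (hb : ∀ i ∈ s, d ∣ b i) (t : ℕ) :
    d ∣ ((t : ℤ) + 1) * Δ_[1] (∏ i ∈ s, fun k => ((a i + k).choose (b i + k) : ℤ)) t :=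
  dvd_succ_mul_fwdDiff_prod _ _ _ (fun i hi t => by
    rw [succ_mul_fwdDiff_choose_add]
    exact dvd_sub ((ha i hi).mul_right _) ((hb i hi).mul_right _)) t

theorem stmt7_general (m : ℕ) (a b : Fin m → ℕ) (n : ℕ) :
    Nat.gcd (Finset.univ.gcd a) (Nat.gcd (Finset.univ.gcd b) n) ∣
      ∑ k ∈ Finset.range n,
        (Nat.choose (n - 1) k) ^ 2 * ∏ i, Nat.choose (a i + k) (b i + k) := by
  obtain _ | N := n
  · simp
  set d := Nat.gcd (univ.gcd a) (Nat.gcd (univ.gcd b) (N + 1))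
  have hdn : d ∣ N + 1 := (Nat.gcd_dvd_right _ _).trans (Nat.gcd_dvd_right _ _)
  have hda : ∀ i, d ∣ a i := fun i => (Nat.gcd_dvd_left _ _).trans (gcd_dvd (mem_univ i))
  have hdb : ∀ i, d ∣ b i := fun i =>
    ((Nat.gcd_dvd_right _ _).trans (Nat.gcd_dvd_left _ _)).trans (gcd_dvd (mem_univ i))
  set F : ℕ → ℤ := ∏ i, fun k => ((a i + k).choose (b i + k) : ℤ)
  have hF : ∀ t : ℕ, (d : ℤ) ∣ ((t : ℤ) + 1) * Δ_[1] F t :=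
    dvd_succ_mul_fwdDiff_prod_choose_add _ _ _ _ (fun i _ => Int.natCast_dvd_natCast.2 (hda i))
      (fun i _ => Int.natCast_dvd_natCast.2 (hdb i))
  have hsum : ((∑ k ∈ range (N + 1), N.choose k ^ 2 * ∏ i, (a i + k).choose (b i + k) : ℕ) : ℤ)
      = ∑ k ∈ range (N + 1), (N.choose k : ℤ) ^ 2 * F k := by
    simp [F, prod_apply]
  rw [Nat.add_sub_cancel, ← Int.natCast_dvd_natCast, hsum, sum_choose_sq_mul_eq_sum_fwdDiff_iter]
  refine dvd_sum fun u hu => ?_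
  have hd : (d : ℤ) ∣ (Nat.gcd d u : ℤ) * (Δ_[1])^[u] F 0 := by
    simpa [← Int.gcd_natCast_natCast, Int.coe_gcd] using
      dvd_gcd_mul_of_dvd_mul (dvd_mul_fwdDiff_iter_zero F d hF u)
  have hchoose : Nat.gcd d u ∣ (2 * N - u).choose (N - u) :=
    dvd_choose_of_dvd_add_one_of_dvd ((Nat.gcd_dvd_left d u).trans hdn) (Nat.gcd_dvd_right d u)
      (by grind)
  exact hd.trans (mul_dvd_mul_right (Int.natCast_dvd_natCast.2 (hchoose.mul_left _)) _)

theorem stmt7 (m : ℕ) (a b : Fin m → ℕ) (n : ℕ) (hn : 0 < n) :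
    Nat.gcd (Finset.univ.gcd a) (Nat.gcd (Finset.univ.gcd b) n) ∣
      ∑ k ∈ Finset.range n,
        (Nat.choose (n - 1) k) ^ 2 * ∏ i, Nat.choose (a i + k) (b i + k) :=
  stmt7_general m a b n
end

section
/- For all nonnegative integers k, m, r, there exist integers a_0, a_1, ..., a_r (depending on k and r but not on m) such that m^r·(m+1)^r·C(m+k, 2k) = ∑_{j=0}^{r} a_j · C(m+k+j, 2k+2j) · (2k+1)_{2j}, where (x)_n = x(x+1)···(x+n-1) is the rising factorial. -/
/-!
Put `x = m (m + 1)`. Since `(m + k + j + 1)(m - k - j) = x - (k + j)(k + j + 1)`, peeling two factors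
at a time gives `C(m+k+j, 2k+2j) (2k+1)_{2j} = C(m+k, 2k) ∏_{i<j} (x - (k+i)(k+i+1))`. The claim thus
says that `x ^ r` expands in the Newton basis with nodes `(k+i)(k+i+1)`, whose coefficients are
divided differences of `x ^ r` and do not involve `m`.
-/

open Finset

theorem Nat.cast_choose_succ_add_two_mul (n s : ℕ) :
    ((n + 1).choose (s + 2) : ℤ) * ((s + 1) * (s + 2)) = n.choose s * ((n + 1) * (n - s)) := by
  rcases le_or_gt s n with hsn | hns
  · have h₁ : ((n + 1) * n.choose (s + 1) : ℤ) = (n + 1).choose (s + 2) * (s + 2) := by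
      exact_mod_cast Nat.add_one_mul_choose_eq n (s + 1)
    have h₂ : (n.choose (s + 1) * (s + 1) : ℤ) = n.choose s * (n - s) := by
      exact_mod_cast Nat.choose_succ_right_eq n s
    linear_combination (n + 1 : ℤ) * h₂ - (s + 1 : ℤ) * h₁
  · simp [Nat.choose_eq_zero_of_lt hns, Nat.choose_eq_zero_of_lt (show n + 1 < s + 2 by omega)]

theorem cast_choose_mul_ascFactorial_eq_prod (k m j : ℕ) :
    ((m + k + j).choose (2 * k + 2 * j) : ℤ) * (2 * k + 1).ascFactorial (2 * j) =
      (m + k).choose (2 * k) * ∏ i ∈ range j, ((m : ℤ) * (m + 1) - (k + i) * (k + i + 1)) := by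
  induction j with
  | zero => simp
  | succ j ih =>
    have step := Nat.cast_choose_succ_add_two_mul (m + k + j) (2 * k + 2 * j)
    rw [show m + k + (j + 1) = m + k + j + 1 by ring,
      show 2 * k + 2 * (j + 1) = 2 * k + 2 * j + 2 by ring,
      show 2 * (j + 1) = 2 * j + 1 + 1 by ring, Nat.ascFactorial_succ, Nat.ascFactorial_succ,
      prod_range_succ]
    push_cast at step ⊢
    linear_combination ((2 * k + 1).ascFactorial (2 * j) : ℤ) * step +
      ((m + k + j + 1) * (m - k - j) : ℤ) * ih

variable {R : Type*} [CommRing R]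

/-- The complete homogeneous symmetric polynomial of degree `r - j` in `c 0, …, c j`. -/
def newtonCoeff (c : ℕ → R) : ℕ → ℕ → R
  | 0, 0 => 1
  | 0, _ + 1 => 0
  | r + 1, 0 => c 0 * newtonCoeff c r 0
  | r + 1, j + 1 => newtonCoeff c r j + c (j + 1) * newtonCoeff c r (j + 1)

theorem newtonCoeff_eq_zero_of_lt (c : ℕ → R) {r j : ℕ} (h : r < j) : newtonCoeff c r j = 0 := by
  induction r generalizing j with
  | zero => obtain ⟨j, rfl⟩ := Nat.exists_eq_add_of_lt h; rfl
  | succ r ih =>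
    obtain ⟨j, rfl⟩ := Nat.exists_eq_add_of_lt h
    simp only [newtonCoeff]
    rw [ih (by omega), ih (by omega), mul_zero, add_zero]

theorem pow_eq_sum_newtonCoeff_mul_prod (c : ℕ → R) (r : ℕ) (x : R) :
    x ^ r = ∑ j ∈ range (r + 1), newtonCoeff c r j * ∏ i ∈ range j, (x - c i) := by
  induction r with
  | zero => simp [newtonCoeff]
  | succ r ih =>
    set P : ℕ → R := fun j => ∏ i ∈ range j, (x - c i)
    have hP (j : ℕ) : x * P j = P (j + 1) + c j * P j := by
      simp only [P, prod_range_succ]; ring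
    have htail : ∑ j ∈ range (r + 1), c j * newtonCoeff c r j * P j =
        ∑ j ∈ range (r + 2), c j * newtonCoeff c r j * P j := by
      rw [sum_range_succ _ (r + 1), newtonCoeff_eq_zero_of_lt c (Nat.lt_succ_self r)]; simp
    calc x ^ (r + 1) = ∑ j ∈ range (r + 1), newtonCoeff c r j * (x * P j) := by
          rw [pow_succ', ih, mul_sum]; exact sum_congr rfl fun j _ => by ring
      _ = ∑ j ∈ range (r + 1), newtonCoeff c r j * P (j + 1) +
            ∑ j ∈ range (r + 2), c j * newtonCoeff c r j * P j := by
          rw [← htail, ← sum_add_distrib]; exact sum_congr rfl fun j _ => by rw [hP]; ring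
      _ = ∑ j ∈ range (r + 2), newtonCoeff c (r + 1) j * P j := by
          rw [sum_range_succ' _ (r + 1), sum_range_succ' (fun j => newtonCoeff c (r + 1) j * P j)]
          simp only [newtonCoeff, add_mul, sum_add_distrib]; ring

theorem stmt8 (k r : ℕ) :
    ∃ a : ℕ → ℤ, ∀ m : ℕ,
      (m : ℤ) ^ r * ((m : ℤ) + 1) ^ r * Nat.choose (m + k) (2 * k) =
        ∑ j ∈ Finset.range (r + 1),
          a j * Nat.choose (m + k + j) (2 * k + 2 * j) *
            ((2 * k + 1).ascFactorial (2 * j)) := by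
  set c : ℕ → ℤ := fun i => (k + i) * (k + i + 1)
  refine ⟨newtonCoeff c r, fun m => ?_⟩
  simp_rw [mul_assoc _ (Nat.choose _ _ : ℤ), cast_choose_mul_ascFactorial_eq_prod, ← mul_pow,
    pow_eq_sum_newtonCoeff_mul_prod c r, sum_mul]
  exact sum_congr rfl fun j _ => by ring
end

section
/- For all nonnegative integers a, k, n with k ≤ n, the identity ∑_{m=k}^{n-1} (2m+1)·C(m+k, 2k)·C(m+k+a, 2k+2a) = (n-k)(n-k-a)/(2k+a+1) · C(n+k, 2k)·C(n+k+a, 2k+2a) holds. -/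
/-!
Writing `F n` for the right-hand side, `F k = 0`, and the ratio identity
`(N + 1) * C(N, r) = (N + 1 - r) * C(N + 1, r)`, applied to both binomial factors, gives
`F (n + 1) - F n = (2k + a + 1) (2n + 1) C(n + k, 2k) C(n + k + a, 2k + 2a)`,
so the sum telescopes.
-/

theorem Nat.cast_succ_mul_choose {R : Type*} [CommRing R] (N r : ℕ) :
    ((N : R) + 1) * N.choose r = ((N : R) + 1 - r) * (N + 1).choose r := by
  rcases le_or_gt r (N + 1) with h | h
  · have h' := congrArg (Nat.cast : ℕ → R) (Nat.choose_mul_succ_eq N r)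
    push_cast [h] at h'
    linear_combination h'
  · simp [Nat.choose_eq_zero_of_lt h, Nat.choose_eq_zero_of_lt (Nat.lt_of_succ_lt h)]

def choosePairSumClosedForm (a k n : ℕ) : ℤ :=
  ((n : ℤ) - k) * ((n : ℤ) - k - a) * Nat.choose (n + k) (2 * k) *
    Nat.choose (n + k + a) (2 * k + 2 * a)

theorem choosePairSumClosedForm_succ_sub (a k n : ℕ) :
    choosePairSumClosedForm a k (n + 1) - choosePairSumClosedForm a k n =
      (2 * (k : ℤ) + a + 1) *
        ((2 * (n : ℤ) + 1) * Nat.choose (n + k) (2 * k) *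
          Nat.choose (n + k + a) (2 * k + 2 * a)) := by
  have h₁ := Nat.cast_succ_mul_choose (R := ℤ) (n + k) (2 * k)
  have h₂ := Nat.cast_succ_mul_choose (R := ℤ) (n + k + a) (2 * k + 2 * a)
  rw [show n + k + 1 = n + 1 + k by omega] at h₁
  rw [show n + k + a + 1 = n + 1 + k + a by omega] at h₂
  unfold choosePairSumClosedForm
  push_cast at h₁ h₂ ⊢
  linear_combination -((n : ℤ) + k + a + 1) * (Nat.choose (n + k + a) (2 * k + 2 * a) : ℤ) * h₁
    - ((n : ℤ) + 1 - k) * (Nat.choose (n + 1 + k) (2 * k) : ℤ) * h₂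

theorem stmt9 (a k n : ℕ) (hkn : k ≤ n) :
    (2 * (k : ℤ) + a + 1) *
        ∑ m ∈ Finset.Ico k n,
          (2 * (m : ℤ) + 1) * Nat.choose (m + k) (2 * k) *
            Nat.choose (m + k + a) (2 * k + 2 * a) =
      ((n : ℤ) - k) * ((n : ℤ) - k - a) * Nat.choose (n + k) (2 * k) *
        Nat.choose (n + k + a) (2 * k + 2 * a) := by
  have h_start : choosePairSumClosedForm a k k = 0 := by simp [choosePairSumClosedForm]
  rw [Finset.mul_sum]
  simp_rw [← choosePairSumClosedForm_succ_sub]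
  rw [Finset.sum_Ico_sub _ hkn, h_start, sub_zero, choosePairSumClosedForm]
end

section
/- For all nonnegative integers a, k and positive integers n, the quantity (n-k)(n-k-a)/(n(2k+a+1)) · C(n+k, 2k)·C(n+k+a, 2k+2a)·C(2k, k)·(2k+1)_{2a} is a nonnegative integer. -/
/-!
Three exact identities absorb the denominator. First, `C(n+k, 2k) C(2k, k) = C(n+k, k) C(n, k)` and
`(n - k) C(n, k) = n C(n-1, k)` produce the factor `n`. Second,
`(n - k - a) C(n+k+a, 2k+2a) = (2k+2a+1) C(n+k+a, 2k+2a+1)`. Finally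
`(2k+2a+1) (2k+1)_{2a} = (2k+1)_{2a+1}`, whose middle factor is `2k+a+1`.
-/

namespace Nat

theorem ascFactorial_one (x : ℕ) : x.ascFactorial 1 = x := by
  simp [ascFactorial_succ]

theorem add_two_mul_mul_ascFactorial_two_mul (x a : ℕ) :
    (x + 2 * a) * x.ascFactorial (2 * a) =
      (x + a) * (x.ascFactorial a * (x + a + 1).ascFactorial a) := by
  have hsplit : (x + a).ascFactorial (1 + a) = (x + a) * (x + a + 1).ascFactorial a := by
    rw [← ascFactorial_mul_ascFactorial, ascFactorial_one]
  calc (x + 2 * a) * x.ascFactorial (2 * a)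
      = x.ascFactorial (2 * a + 1) := ascFactorial_succ.symm
    _ = x.ascFactorial (a + (1 + a)) := by rw [show 2 * a + 1 = a + (1 + a) by omega]
    _ = (x + a) * (x.ascFactorial a * (x + a + 1).ascFactorial a) := by
      rw [← ascFactorial_mul_ascFactorial, hsplit]; ring

theorem mul_choose_sub_one (n k : ℕ) : n * (n - 1).choose k = n.choose (k + 1) * (k + 1) := by
  cases n with
  | zero => simp
  | succ m => exact add_one_mul_choose_eq m k

end Nat

theorem Int.sub_mul_choose_eq_cast_sub_mul (n k : ℕ) :
    ((n : ℤ) - k) * n.choose k = ((n - k : ℕ) : ℤ) * n.choose k := by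
  rcases le_or_gt k n with h | h
  · push_cast [h]; rfl
  · simp [Nat.choose_eq_zero_of_lt h]

theorem Int.sub_mul_choose_eq_choose_succ (n k : ℕ) :
    ((n : ℤ) - k) * n.choose k = n.choose (k + 1) * (k + 1) := by
  rw [Int.sub_mul_choose_eq_cast_sub_mul]
  exact_mod_cast (mul_comm _ _).trans (Nat.choose_succ_right_eq n k).symm

theorem Int.sub_mul_choose_eq_mul_choose_sub_one (n k : ℕ) :
    ((n : ℤ) - k) * n.choose k = n * (n - 1).choose k := by
  rw [Int.sub_mul_choose_eq_choose_succ]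
  exact_mod_cast (Nat.mul_choose_sub_one n k).symm

theorem Int.sub_mul_choose_two_mul_mul_choose (n k : ℕ) :
    ((n : ℤ) - k) * (n + k).choose (2 * k) * (2 * k).choose k =
      n * (n - 1).choose k * (n + k).choose k := by
  have hsplit : (n + k).choose (2 * k) * (2 * k).choose k = (n + k).choose k * n.choose k := by
    simpa [show n + k - k = n by omega, show 2 * k - k = k by omega] using
      Nat.choose_mul (n := n + k) (show k ≤ 2 * k by omega)
  have hsplit' := congrArg (Nat.cast : ℕ → ℤ) hsplit
  push_cast at hsplit'
  linear_combination ((n : ℤ) - k) * hsplit' +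
    ((n + k).choose k : ℤ) * Int.sub_mul_choose_eq_mul_choose_sub_one n k

theorem stmt10_general (a k n : ℕ) :
    ∃ N : ℕ, ((n : ℤ) - k) * ((n : ℤ) - k - a) * Nat.choose (n + k) (2 * k) *
        Nat.choose (n + k + a) (2 * k + 2 * a) * Nat.choose (2 * k) k *
        ((2 * k + 1).ascFactorial (2 * a)) =
      (N : ℤ) * (n * (2 * (k : ℤ) + a + 1)) := by
  refine ⟨(n - 1).choose k * (n + k).choose k * (n + k + a).choose (2 * k + 2 * a + 1) *
    (2 * k + 1).ascFactorial a * (2 * k + a + 2).ascFactorial a, ?_⟩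
  have hk := Int.sub_mul_choose_two_mul_mul_choose n k
  have hka := Int.sub_mul_choose_eq_choose_succ (n + k + a) (2 * k + 2 * a)
  have hasc : (2 * k + 2 * a + 1) * (2 * k + 1).ascFactorial (2 * a) =
      (2 * k + a + 1) * ((2 * k + 1).ascFactorial a * (2 * k + a + 2).ascFactorial a) := by
    simpa only [show 2 * k + 1 + a + 1 = 2 * k + a + 2 by omega, add_right_comm _ 1]
      using Nat.add_two_mul_mul_ascFactorial_two_mul (2 * k + 1) a
  zify at hasc
  push_cast at hka ⊢
  linear_combination
    ((n : ℤ) - k - a) * (n + k + a).choose (2 * k + 2 * a) * (2 * k + 1).ascFactorial (2 * a) * hk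
    + n * (n - 1).choose k * (n + k).choose k * (2 * k + 1).ascFactorial (2 * a) * hka
    + n * (n - 1).choose k * (n + k).choose k * (n + k + a).choose (2 * k + 2 * a + 1) * hasc

theorem stmt10 (a k n : ℕ) (hn : 0 < n) :
    ∃ N : ℕ, ((n : ℤ) - k) * ((n : ℤ) - k - a) * Nat.choose (n + k) (2 * k) *
        Nat.choose (n + k + a) (2 * k + 2 * a) * Nat.choose (2 * k) k *
        ((2 * k + 1).ascFactorial (2 * a)) =
      (N : ℤ) * (n * (2 * (k : ℤ) + a + 1)) :=
  stmt10_general a k n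
end

section
/- For all nonnegative integers k and n, the identity ∑_{m=0}^{n-1} (2m+1)·C(m+k, 2k) = n(n-k)/(k+1) · C(n+k, 2k) holds. -/
theorem Int.choose_mul_succ_eq (n k : ℕ) :
    (n.choose k : ℤ) * (n + 1) = (n + 1).choose k * ((n : ℤ) + 1 - k) := by
  rcases le_or_gt k (n + 1) with hk | hk
  · have h := congrArg (Nat.cast : ℕ → ℤ) (Nat.choose_mul_succ_eq n k)
    push_cast [Nat.cast_sub hk] at h
    exact h
  · rw [Nat.choose_eq_zero_of_lt (by omega), Nat.choose_eq_zero_of_lt hk]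
    simp

theorem stmt11 (k n : ℕ) :
    ((k : ℤ) + 1) * ∑ m ∈ Finset.range n, (2 * (m : ℤ) + 1) * Nat.choose (m + k) (2 * k) =
      (n : ℤ) * ((n : ℤ) - k) * Nat.choose (n + k) (2 * k) := by
  induction n with
  | zero => simp
  | succ n ih =>
    have step := Int.choose_mul_succ_eq (n + k) (2 * k)
    rw [Finset.sum_range_succ, mul_add, ih, Nat.add_right_comm n 1 k]
    push_cast at step ⊢
    linear_combination ((n : ℤ) + 1) * step
end

section
/- For all nonnegative integers k and n, the identity ∑_{m=0}^{n-1} (-1)^m·(2m+1)·C(m+k, 2k) = (-1)^{n-1}·(n-k)·C(n+k, 2k) holds. -/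
theorem Nat.choose_mul_succ_eq_int (m r : ℕ) :
    (m.choose r : ℤ) * (m + 1) = ((m : ℤ) + 1 - r) * (m + 1).choose r := by
  rcases le_or_gt r (m + 1) with hr | hr
  · have h := congrArg (Nat.cast : ℕ → ℤ) (Nat.choose_mul_succ_eq m r)
    push_cast [Nat.cast_sub hr] at h
    linarith
  · simp [Nat.choose_eq_zero_of_lt hr, Nat.choose_eq_zero_of_lt (Nat.lt_of_succ_lt hr)]

theorem stmt12 (k n : ℕ) :
    ∑ m ∈ Finset.range n, (-1 : ℤ) ^ m * (2 * (m : ℤ) + 1) * Nat.choose (m + k) (2 * k) =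
      (-1 : ℤ) ^ (n + 1) * ((n : ℤ) - k) * Nat.choose (n + k) (2 * k) := by
  apply Finset.sum_range_induction
  case base =>
    rcases k with _ | k
    · simp
    · simp [Nat.choose_eq_zero_of_lt (by omega : k + 1 < 2 * (k + 1))]
  case step =>
    intro n _
    -- `(m + 1) C(m, 2k) = (m + 1 - 2k) C(m + 1, 2k)` at `m = n + k` makes the sum telescope.
    have h := Nat.choose_mul_succ_eq_int (n + k) (2 * k)
    rw [show n + 1 + k = n + k + 1 by omega]
    push_cast at h ⊢
    linear_combination -(-1 : ℤ) ^ n * h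
end

section
/- For all positive integers n and nonnegative integers r, the sum ∑_{k=0}^{n-1} (-1)^k·(2k+1)^{2r+1}·D_k is congruent modulo 2n to n if n is odd and to 0 if n is even, where D_k is the k-th central Delannoy number. -/
/-!
Write `D_k = ∑_j C(k+j, j) C(k, j)` and exchange the sums: the sum becomes `∑_{j<n} M_r(j)` with
`M_r(j) = ∑_{k<n} (-1)^k (2k+1)^(2r+1) C(k+j, j) C(k, j)`. Since
`(2k+1)^2 = (2j+1)^2 + 4(k-j)(k+j+1)`, these satisfy
`M_{r+1}(j) = (2j+1)^2 M_r(j) + (2j+2)^2 M_r(j+1)`, and telescoping gives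
`M_0(j) = (-1)^(n-1) n C(n+j, j) C(n-1, j)`. As `M_0` takes values in `nℤ` and the coefficients are
odd and even respectively, `M_r(j) ≡ M_0(j) (mod 2n)`. It remains to see that
`∑_j C(n+j, j) C(n-1, j) ≡ n (mod 2)`: with alternating signs this sum is the `(n-1)`-st forward
difference of `x ↦ C(x, n)` at `n`, which is exactly `n`.
-/

open Finset

theorem delannoy_eq_sum_choose_mul_choose {k n : ℕ} (hkn : k < n) :
    delannoy k = ∑ j ∈ range n, (k + j).choose j * k.choose j := by
  have hvanish : ∀ j ∈ range n, j ∉ range (k + 1) →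
      (k + j).choose (2 * j) * (2 * j).choose j = 0 :=
    fun j _ hj => by rw [Nat.choose_eq_zero_of_lt (by simp at hj; omega), zero_mul]
  rw [delannoy, sum_subset (range_subset_range.mpr hkn) hvanish]
  refine sum_congr rfl fun j _ => ?_
  rw [Nat.choose_mul (by omega : j ≤ 2 * j), Nat.add_sub_cancel, two_mul, Nat.add_sub_cancel]

theorem sub_mul_choose (k j : ℕ) :
    ((k : ℤ) - j) * k.choose j = (j + 1) * k.choose (j + 1) := by
  rcases le_or_gt j k with hjk | hkj
  · have := Nat.choose_succ_right_eq k j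
    zify [hjk] at this
    linarith
  · simp [Nat.choose_eq_zero_of_lt hkj, Nat.choose_eq_zero_of_lt (hkj.trans j.lt_succ_self)]

theorem two_mul_add_one_sq_mul_choose_mul_choose (k j : ℕ) :
    (2 * (k : ℤ) + 1) ^ 2 * ((k + j).choose j * k.choose j) =
      (2 * (j : ℤ) + 1) ^ 2 * ((k + j).choose j * k.choose j) +
        (2 * (j : ℤ) + 2) ^ 2 * ((k + (j + 1)).choose (j + 1) * k.choose (j + 1)) := by
  have h₁ : ((k + j : ℕ) + 1 : ℤ) * (k + j).choose j = (k + j + 1).choose (j + 1) * (j + 1) := by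
    exact_mod_cast Nat.add_one_mul_choose_eq (k + j) j
  have h₂ := sub_mul_choose k j
  push_cast at h₁ ⊢
  linear_combination 4 * ((k : ℤ) - j) * k.choose j * h₁ +
    4 * ((j : ℤ) + 1) * (k + j + 1).choose (j + 1) * h₂

theorem alternating_sum_odd_mul_choose_mul_choose (m j : ℕ) :
    ∑ k ∈ range (m + 1), (-1) ^ k * (2 * (k : ℤ) + 1) * ((k + j).choose j * k.choose j) =
      (-1) ^ m * (m + 1) * ((m + 1 + j).choose j * m.choose j) := by
  induction m with
  | zero => cases j <;> simp
  | succ m ih =>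
    have h₁ : (m + 1 + j).choose j * (m + 1 + j + 1) = (m + 1 + 1 + j).choose j * (m + 2) := by
      rw [Nat.choose_mul_succ_eq, show m + 1 + j + 1 - j = m + 2 by omega,
        show m + 1 + j + 1 = m + 1 + 1 + j by omega]
    have h₂ : ((m : ℤ) + 1) * m.choose j = (m + 1).choose (j + 1) * (j + 1) := by
      exact_mod_cast Nat.add_one_mul_choose_eq m j
    have h₃ := sub_mul_choose (m + 1) j
    rw [sum_range_succ, ih]
    zify at h₁
    push_cast at h₃ ⊢
    linear_combination
      (-1) ^ m * (m + 1 + j).choose j * (h₂ - h₃) - (-1) ^ m * (m + 1).choose j * h₁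

/-- The left side is the `m`-th forward difference of `x ↦ C(x, m + 1)` at `m + 1`. -/
theorem alternating_sum_choose_mul_choose_add (m : ℕ) :
    ∑ j ∈ range (m + 1), (-1) ^ (m - j) * (m.choose j : ℤ) * (m + 1 + j).choose j = m + 1 := by
  have h := fwdDiff_iter_eq_sum_shift (h := 1) (fun x : ℕ ↦ (x.choose (m + 1) : ℤ)) m (m + 1)
  rw [fwdDiff_iter_choose 1 m] at h
  simp only [Nat.choose_one_right, smul_eq_mul, mul_one, Nat.choose_symm_add] at h
  exact_mod_cast h.symm

theorem neg_one_pow_mul_modEq_two (a b : ℕ) (x : ℤ) : (-1) ^ a * x ≡ (-1) ^ b * x [ZMOD 2] := by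
  have h (c : ℕ) : (-1 : ℤ) ^ c ≡ 1 [ZMOD 2] := by
    simpa using (show (-1 : ℤ) ≡ 1 [ZMOD 2] by decide).pow c
  exact ((h a).trans (h b).symm).mul_right x

theorem sum_choose_mul_choose_modEq_two (m : ℕ) :
    ∑ j ∈ range (m + 1), (-1) ^ m * ((m + 1 + j).choose j * m.choose j : ℤ) ≡ m + 1 [ZMOD 2] := by
  rw [← alternating_sum_choose_mul_choose_add]
  refine Int.ModEq.sum fun j _ => ?_
  rw [mul_assoc, mul_comm ((m + 1 + j).choose j : ℤ)]
  exact neg_one_pow_mul_modEq_two _ _ _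

theorem modEq_of_sq_recurrence {n : ℤ} (u : ℕ → ℕ → ℤ)
    (hu : ∀ r j, u (r + 1) j = (2 * j + 1) ^ 2 * u r j + (2 * j + 2) ^ 2 * u r (j + 1))
    (h₀ : ∀ j, n ∣ u 0 j) (r j : ℕ) : u r j ≡ u 0 j [ZMOD 2 * n] := by
  induction r generalizing j with
  | zero => rfl
  | succ r ih =>
    obtain ⟨a, ha⟩ := h₀ j
    obtain ⟨b, hb⟩ := h₀ (j + 1)
    rw [hu]
    calc (2 * j + 1) ^ 2 * u r j + (2 * j + 2) ^ 2 * u r (j + 1)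
        ≡ (2 * j + 1) ^ 2 * u 0 j + (2 * j + 2) ^ 2 * u 0 (j + 1) [ZMOD 2 * n] :=
          ((ih j).mul_left _).add ((ih (j + 1)).mul_left _)
      _ ≡ u 0 j [ZMOD 2 * n] :=
          Int.modEq_iff_dvd.mpr ⟨-(2 * j * (j + 1) * a + 2 * (j + 1) ^ 2 * b), by rw [ha, hb]; ring⟩

theorem mul_modEq_ite_odd (n : ℕ) {s : ℤ} (hs : s ≡ n [ZMOD 2]) :
    n * s ≡ if Odd n then (n : ℤ) else 0 [ZMOD 2 * n] := by
  have hsq : (n : ℤ) * s ≡ n * n [ZMOD 2 * n] := by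
    rw [mul_comm 2]
    exact hs.mul_left'
  refine hsq.trans ?_
  rcases Nat.even_or_odd n with ⟨t, rfl⟩ | ⟨t, rfl⟩
  · rw [if_neg (Nat.not_odd_iff_even.mpr ⟨t, rfl⟩)]
    exact Int.modEq_iff_dvd.mpr ⟨-t, by push_cast; ring⟩
  · rw [if_pos ⟨t, rfl⟩]
    exact Int.modEq_iff_dvd.mpr ⟨-t, by push_cast; ring⟩

def delannoyMoment (n r j : ℕ) : ℤ :=
  ∑ k ∈ range n, (-1) ^ k * (2 * (k : ℤ) + 1) ^ (2 * r + 1) * ((k + j).choose j * k.choose j)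

theorem sum_delannoyMoment (n r : ℕ) :
    ∑ j ∈ range n, delannoyMoment n r j =
      ∑ k ∈ range n, (-1) ^ k * (2 * (k : ℤ) + 1) ^ (2 * r + 1) * delannoy k := by
  simp only [delannoyMoment]
  rw [sum_comm]
  refine sum_congr rfl fun k hk => ?_
  rw [delannoy_eq_sum_choose_mul_choose (mem_range.mp hk)]
  push_cast
  rw [mul_sum]

theorem delannoyMoment_succ (n r j : ℕ) :
    delannoyMoment n (r + 1) j =
      (2 * j + 1) ^ 2 * delannoyMoment n r j + (2 * j + 2) ^ 2 * delannoyMoment n r (j + 1) := by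
  simp only [delannoyMoment, mul_sum, ← sum_add_distrib]
  refine sum_congr rfl fun k _ => ?_
  linear_combination
    (-1) ^ k * (2 * (k : ℤ) + 1) ^ (2 * r + 1) * two_mul_add_one_sq_mul_choose_mul_choose k j

theorem delannoyMoment_zero (m j : ℕ) :
    delannoyMoment (m + 1) 0 j = (m + 1) * ((-1) ^ m * ((m + 1 + j).choose j * m.choose j)) := by
  simp only [delannoyMoment, mul_zero, zero_add, pow_one]
  rw [alternating_sum_odd_mul_choose_mul_choose]
  ring

theorem stmt14_general (n : ℕ) (r : ℕ) :
    (∑ k ∈ Finset.range n, (-1 : ℤ) ^ k * (2 * (k : ℤ) + 1) ^ (2 * r + 1) * delannoy k) ≡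
      (if Odd n then (n : ℤ) else 0) [ZMOD 2 * n] := by
  cases n with
  | zero => simp
  | succ m =>
    rw [← sum_delannoyMoment]
    calc ∑ j ∈ range (m + 1), delannoyMoment (m + 1) r j
        ≡ ∑ j ∈ range (m + 1), delannoyMoment (m + 1) 0 j [ZMOD 2 * (m + 1 : ℕ)] :=
          Int.ModEq.sum fun j _ => modEq_of_sq_recurrence _ (delannoyMoment_succ _)
            (fun j => ⟨_, delannoyMoment_zero m j⟩) r j
      _ = ((m + 1 : ℕ) : ℤ) *
            ∑ j ∈ range (m + 1), (-1) ^ m * ((m + 1 + j).choose j * m.choose j : ℤ) := by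
          simp only [delannoyMoment_zero, ← mul_sum]
          push_cast
          rfl
      _ ≡ _ [ZMOD 2 * (m + 1 : ℕ)] :=
          mul_modEq_ite_odd _ (by exact_mod_cast sum_choose_mul_choose_modEq_two m)

theorem stmt14 (n : ℕ) (hn : 0 < n) (r : ℕ) :
    (∑ k ∈ Finset.range n, (-1 : ℤ) ^ k * (2 * (k : ℤ) + 1) ^ (2 * r + 1) * delannoy k) ≡
      (if Odd n then (n : ℤ) else 0) [ZMOD 2 * n] :=
  stmt14_general n r
end

section
/- For all integers n ≥ 0 and all k with 0 ≤ k ≤ n-1, the identity ∑_{m=0}^{n-1} (2m+1)^3·C(m+k, 2k)^2 = (n-k)^2·(2n^2-k-1)/(k+1) · C(n+k, 2k)^2 holds. -/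
/-!
Let `F n` be the right-hand side. Since `C(n+1+k, 2k) * (n+1-k) = C(n+k, 2k) * (n+1+k)`,
the difference `F (n+1) - F n` is a multiple of `C(n+k, 2k)^2` whose cofactor simplifies to
`(k+1) (2n+1)^3`, so the identity telescopes. Both sides vanish for `n ≤ k`, which lets the
induction start at `n = 0`.
-/

lemma sub_mul_choose_succ_eq_mul_choose (m r : ℕ) :
    ((m : ℤ) + 1 - r) * (m + 1).choose r = ((m : ℤ) + 1) * m.choose r := by
  rcases le_or_gt r (m + 1) with hr | hr
  · have h := congrArg (Nat.cast : ℕ → ℤ) (Nat.choose_mul_succ_eq m r)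
    push_cast [Nat.cast_sub hr] at h
    linarith
  · simp [Nat.choose_eq_zero_of_lt hr, Nat.choose_eq_zero_of_lt (Nat.lt_of_succ_lt hr)]

theorem stmt15_general (n k : ℕ) :
    ((k : ℤ) + 1) *
        ∑ m ∈ Finset.range n, (2 * (m : ℤ) + 1) ^ 3 * (Nat.choose (m + k) (2 * k)) ^ 2 =
      ((n : ℤ) - k) ^ 2 * (2 * (n : ℤ) ^ 2 - k - 1) * (Nat.choose (n + k) (2 * k)) ^ 2 := by
  induction n with
  | zero => rcases k with _ | k <;> simp [Nat.choose_eq_zero_of_lt]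
  | succ n ih =>
    have hstep := sub_mul_choose_succ_eq_mul_choose (n + k) (2 * k)
    rw [show n + k + 1 = n + 1 + k by omega] at hstep
    rw [Finset.sum_range_succ, mul_add, ih]
    push_cast at hstep ⊢
    linear_combination (-(2 * ((n : ℤ) + 1) ^ 2 - k - 1)) *
      (((n : ℤ) + 1 - k) * Nat.choose (n + 1 + k) (2 * k) +
        ((n : ℤ) + 1 + k) * Nat.choose (n + k) (2 * k)) * hstep

theorem stmt15 (n k : ℕ) (hk : k < n) :
    ((k : ℤ) + 1) *
        ∑ m ∈ Finset.range n, (2 * (m : ℤ) + 1) ^ 3 * (Nat.choose (m + k) (2 * k)) ^ 2 =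
      ((n : ℤ) - k) ^ 2 * (2 * (n : ℤ) ^ 2 - k - 1) * (Nat.choose (n + k) (2 * k)) ^ 2 :=
  stmt15_general n k
end

section
/- For every prime p > 3, the sum ∑_{k=0}^{p-1} C(p+k, k)^2·C(p-1, k)^2 is congruent to p modulo 2p^4. -/
/-!
Write `a k = C(p+k, k) * C(p-1, k)`. Since `a (k+1) / a k = (p² - (k+1)²) / (k+1)²`, in `ZMod (p⁴)`
we get `a k = ∏_{j ≤ k} (p²/j² - 1)`, hence `a k ^ 2 = 1 - 2 p² H⁽²⁾ₖ` because `(p²)² = 0`.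
Summing over `k < p` and exchanging the sums gives `p - 2 p³ H⁽²⁾ₚ₋₁ + 2 p² Hₚ₋₁`, and both
corrections vanish: `H⁽²⁾ₚ₋₁ ≡ 0 (mod p)` because `∑ x²` over `𝔽ₚ` vanishes for `p > 3`, and
`Hₚ₋₁ ≡ 0 (mod p²)` (Wolstenholme). Modulo 2, `a k` is even for `0 < k < p` because
`p * a k = C(p+k, 2k) * C(2k, k) * (p - k)` and central binomial coefficients are even.
-/

open Finset

namespace Nat

theorem coprime_prime_pow_of_pos_of_lt {p j : ℕ} (hp : p.Prime) (hj : 0 < j) (hjp : j < p)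
    (a : ℕ) : j.Coprime (p ^ a) :=
  (coprime_of_lt_prime hj.ne' hjp hp).symm.pow_right a

theorem choose_add_succ_mul_choose_sub_one_succ_mul_sq (n k : ℕ) :
    (n + (k + 1)).choose (k + 1) * (n - 1).choose (k + 1) * (k + 1) ^ 2 =
      (n + k).choose k * (n - 1).choose k * ((n + k + 1) * (n - 1 - k)) := by
  have h₁ : (n + k + 1) * (n + k).choose k = (n + k + 1).choose (k + 1) * (k + 1) :=
    add_one_mul_choose_eq (n + k) k
  have h₂ : (n - 1).choose (k + 1) * (k + 1) = (n - 1).choose k * (n - 1 - k) :=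
    choose_succ_right_eq (n - 1) k
  rw [← add_assoc]
  linear_combination
    (n - 1).choose (k + 1) * (k + 1) * h₁.symm + (n + k + 1) * (n + k).choose k * h₂

theorem mul_choose_add_mul_choose_sub_one (n k : ℕ) :
    n * ((n + k).choose k * (n - 1).choose k) =
      (n + k).choose (2 * k) * centralBinom k * (n - k) := by
  rcases n.eq_zero_or_pos with rfl | hn
  · simp
  have h₁ : (n - 1).choose k * n = n.choose k * (n - k) := by
    simpa [Nat.sub_add_cancel hn] using choose_mul_succ_eq (n - 1) k
  have h₂ : (n + k).choose (2 * k) * centralBinom k = (n + k).choose k * n.choose k := by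
    simpa [centralBinom, two_mul] using choose_mul (n := n + k) (k := 2 * k) (s := k) (by omega)
  rw [h₂, mul_assoc, ← h₁]
  ring

theorem two_dvd_choose_add_mul_choose_sub_one {n k : ℕ} (hn : Odd n) (hk : 0 < k) :
    2 ∣ (n + k).choose k * (n - 1).choose k := by
  have h : 2 ∣ n * ((n + k).choose k * (n - 1).choose k) := by
    rw [mul_choose_add_mul_choose_sub_one]
    exact ((two_dvd_centralBinom_of_one_le hk).mul_left _).mul_right _
  exact ((coprime_two_left.mpr hn).dvd_mul_left).mp h

theorem sum_range_choose_add_sq_mul_choose_sub_one_sq_modEq_one {n : ℕ} (hn : Odd n) :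
    ∑ k ∈ range n, (n + k).choose k ^ 2 * (n - 1).choose k ^ 2 ≡ 1 [MOD 2] := by
  have hpos : 2 ∣ ∑ k ∈ Ico 1 n, (n + k).choose k ^ 2 * (n - 1).choose k ^ 2 := by
    refine dvd_sum fun k hk => ?_
    rw [← mul_pow]
    exact dvd_pow (two_dvd_choose_add_mul_choose_sub_one hn (mem_Ico.mp hk).1) two_ne_zero
  rw [range_eq_Ico, sum_eq_sum_Ico_succ_bot hn.pos]
  simpa using (modEq_zero_iff_dvd.mpr hpos).add_left 1

end Nat

namespace Finset

theorem prod_one_add_mul_of_sq_eq_zero {ι R : Type*} [CommSemiring R] {ε : R}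
    (hε : ε ^ 2 = 0) (s : Finset ι) (x : ι → R) :
    ∏ i ∈ s, (1 + ε * x i) = 1 + ε * ∑ i ∈ s, x i := by
  classical
  induction s using Finset.induction_on with
  | empty => simp
  | insert i s hi ih =>
    rw [prod_insert hi, sum_insert hi, ih]
    calc (1 + ε * x i) * (1 + ε * ∑ j ∈ s, x j)
        = 1 + ε * (x i + ∑ j ∈ s, x j) + ε ^ 2 * (x i * ∑ j ∈ s, x j) := by ring
      _ = 1 + ε * (x i + ∑ j ∈ s, x j) := by rw [hε, zero_mul, add_zero]

theorem sum_range_sum_Icc_one_eq_sum_Ico_nsmul {M : Type*} [AddCommMonoid M] (n : ℕ)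
    (f : ℕ → M) : ∑ k ∈ range n, ∑ j ∈ Icc 1 k, f j = ∑ j ∈ Ico 1 n, (n - j) • f j := by
  rw [sum_comm' (t' := Ico 1 n) (s' := fun j => Ico j n)]
  · simp
  · intro k j
    simp only [mem_range, mem_Icc, mem_Ico]
    omega

end Finset

namespace ZMod

theorem natCast_mul_eq_zero_of_castHom_eq_zero {m c n : ℕ} (h : m * c = n) {x : ZMod n}
    (hx : castHom (Dvd.intro c h) (ZMod m) x = 0) : (c : ZMod n) * x = 0 := by
  subst h
  rw [castHom_apply, ← intCast_cast, intCast_zmod_eq_zero_iff_dvd] at hx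
  rw [← intCast_zmod_cast x, ← Int.cast_natCast, ← Int.cast_mul, intCast_zmod_eq_zero_iff_dvd,
    Nat.cast_mul, mul_comm (m : ℤ)]
  exact mul_dvd_mul_left _ hx

theorem map_inv_natCast {m n : ℕ} (f : ZMod n →+* ZMod m) {j : ℕ} (hj : j.Coprime n) :
    f (j : ZMod n)⁻¹ = (j : ZMod m)⁻¹ := by
  symm
  apply ZMod.inv_eq_of_mul_eq_one
  rw [← map_natCast f j, ← map_mul, coe_mul_inv_eq_one j hj, map_one]

theorem sum_range_natCast_s16 {M : Type*} [AddCommMonoid M] (n : ℕ) [NeZero n] (g : ZMod n → M) :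
    ∑ j ∈ range n, g j = ∑ x : ZMod n, g x := by
  obtain ⟨m, rfl⟩ : ∃ m, n = m + 1 := Nat.exists_eq_succ_of_ne_zero (NeZero.ne n)
  rw [Finset.sum_range (fun j => g j)]
  exact Fintype.sum_congr _ _ fun i => congrArg g (Fin.cast_val_eq_self i)

theorem sum_Ico_inv_pow_eq_zero (p : ℕ) [Fact p.Prime] {i : ℕ} (hi : i ≠ 0) (hip : i < p - 1) :
    ∑ j ∈ Ico 1 p, ((j : ZMod p)⁻¹) ^ i = 0 := by
  have h : ∑ j ∈ range p, ((j : ZMod p)⁻¹) ^ i = 0 := by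
    rw [sum_range_natCast_s16 p (fun x => x⁻¹ ^ i),
      Fintype.sum_equiv (Equiv.inv (ZMod p)) (fun x => x⁻¹ ^ i) (· ^ i) fun _ => rfl]
    exact FiniteField.sum_pow_lt_card_sub_one (K := ZMod p) i (by rwa [ZMod.card])
  rwa [range_eq_Ico, sum_eq_sum_Ico_succ_bot (Fact.out : p.Prime).pos, Nat.cast_zero, inv_zero,
    zero_pow hi, zero_add] at h

/-- Wolstenholme's theorem. -/
theorem sum_Ico_inv_eq_zero (p : ℕ) [Fact p.Prime] (hp : 3 < p) :
    ∑ j ∈ Ico 1 p, (j : ZMod (p ^ 2))⁻¹ = 0 := by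
  have hp' : p.Prime := Fact.out
  have hcop : ∀ j ∈ Ico 1 p, ∀ a, j.Coprime (p ^ a) ∧ (p - j).Coprime (p ^ a) := by
    intro j hj a
    rw [mem_Ico] at hj
    exact ⟨Nat.coprime_prime_pow_of_pos_of_lt hp' (by omega) (by omega) a,
      Nat.coprime_prime_pow_of_pos_of_lt hp' (by omega) (by omega) a⟩
  have hreflect : ∑ j ∈ Ico 1 p, ((p - j : ℕ) : ZMod (p ^ 2))⁻¹ =
      ∑ j ∈ Ico 1 p, (j : ZMod (p ^ 2))⁻¹ := by
    simpa using sum_Ico_reflect (fun j => (j : ZMod (p ^ 2))⁻¹) 1 p.le_succ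
  have hpair : ∀ j ∈ Ico 1 p, (j : ZMod (p ^ 2))⁻¹ + ((p - j : ℕ) : ZMod (p ^ 2))⁻¹ =
      p * ((j : ZMod (p ^ 2))⁻¹ * ((p - j : ℕ) : ZMod (p ^ 2))⁻¹) := by
    intro j hj
    have hu := coe_mul_inv_eq_one j (hcop j hj 2).1
    have hv := coe_mul_inv_eq_one (p - j) (hcop j hj 2).2
    have hsum : (p : ZMod (p ^ 2)) = j + (p - j : ℕ) := by
      rw [← Nat.cast_add, Nat.add_sub_cancel' (mem_Ico.mp hj).2.le]
    rw [hsum]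
    linear_combination (-((p - j : ℕ) : ZMod (p ^ 2))⁻¹) * hu - (j : ZMod (p ^ 2))⁻¹ * hv
  have hmodp : (p : ZMod (p ^ 2)) *
      ∑ j ∈ Ico 1 p, (j : ZMod (p ^ 2))⁻¹ * ((p - j : ℕ) : ZMod (p ^ 2))⁻¹ = 0 := by
    refine natCast_mul_eq_zero_of_castHom_eq_zero (sq p).symm ?_
    rw [map_sum]
    calc _ = ∑ j ∈ Ico 1 p, -((j : ZMod p)⁻¹ ^ 2) := by
          refine sum_congr rfl fun j hj => ?_
          rw [map_mul, map_inv_natCast _ (hcop j hj 2).1, map_inv_natCast _ (hcop j hj 2).2,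
            Nat.cast_sub (mem_Ico.mp hj).2.le, natCast_self, zero_sub, inv_neg]
          ring
      _ = 0 := by rw [sum_neg_distrib, sum_Ico_inv_pow_eq_zero p two_ne_zero (by omega), neg_zero]
  have htwo : (2 : ZMod (p ^ 2)) * ∑ j ∈ Ico 1 p, (j : ZMod (p ^ 2))⁻¹ = 0 := by
    rw [two_mul]
    nth_rw 2 [← hreflect]
    rw [← sum_add_distrib, sum_congr rfl hpair, ← mul_sum, hmodp]
  have hunit : IsUnit (2 : ZMod (p ^ 2)) := by
    simpa using (isUnit_iff_coprime 2 (p ^ 2)).mpr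
      (Nat.Coprime.pow_right 2 ((Nat.coprime_primes Nat.prime_two hp').mpr (by omega)))
  exact hunit.mul_right_eq_zero.mp htwo

theorem choose_add_mul_choose_sub_one_eq_prod {N n k : ℕ} (hk : k < n)
    (hN : ∀ j ∈ Icc 1 k, j.Coprime N) :
    (((n + k).choose k * (n - 1).choose k : ℕ) : ZMod N) =
      ∏ j ∈ Icc 1 k, ((n : ZMod N) ^ 2 * ((j : ZMod N)⁻¹) ^ 2 - 1) := by
  induction k with
  | zero => simp
  | succ k ih =>
    set a : ZMod N := (((n + k).choose k * (n - 1).choose k : ℕ) : ZMod N)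
    set b : ZMod N := (((n + (k + 1)).choose (k + 1) * (n - 1).choose (k + 1) : ℕ) : ZMod N)
    set c : ZMod N := ((k + 1 : ℕ) : ZMod N)
    have hc : c * c⁻¹ = 1 := coe_mul_inv_eq_one (k + 1) (hN (k + 1) (by simp))
    have hrec : b * c ^ 2 = a * ((n : ZMod N) ^ 2 - c ^ 2) := by
      have h := congrArg (Nat.cast : ℕ → ZMod N)
        (Nat.choose_add_succ_mul_choose_sub_one_succ_mul_sq n k)
      push_cast [a, b, c, Nat.cast_sub (show k ≤ n - 1 by omega),
        Nat.cast_sub (show 1 ≤ n by omega)] at h ⊢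
      linear_combination h
    rw [prod_Icc_succ_top (by omega), ← ih (by omega) fun j hj => hN j (by simp at hj ⊢; omega)]
    linear_combination c⁻¹ ^ 2 * hrec - (b + a) * (c * c⁻¹ + 1) * hc

theorem sq_choose_add_mul_choose_sub_one {p k : ℕ} (hp : p.Prime) (hk : k < p) :
    (((p + k).choose k * (p - 1).choose k : ℕ) : ZMod (p ^ 4)) ^ 2 =
      1 - 2 * (p : ZMod (p ^ 4)) ^ 2 * ∑ j ∈ Icc 1 k, ((j : ZMod (p ^ 4))⁻¹) ^ 2 := by
  have hε : ((p : ZMod (p ^ 4)) ^ 2) ^ 2 = 0 := by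
    rw [← pow_mul, ← Nat.cast_pow, natCast_self]
  rw [choose_add_mul_choose_sub_one_eq_prod hk fun j hj =>
    Nat.coprime_prime_pow_of_pos_of_lt hp (mem_Icc.mp hj).1
      (by have := (mem_Icc.mp hj).2; omega) 4, ← prod_pow]
  calc _ = ∏ j ∈ Icc 1 k, (1 + (p : ZMod (p ^ 4)) ^ 2 * (-2 * ((j : ZMod (p ^ 4))⁻¹) ^ 2)) :=
        prod_congr rfl fun j _ => by linear_combination ((j : ZMod (p ^ 4))⁻¹) ^ 4 * hε
    _ = _ := by rw [prod_one_add_mul_of_sq_eq_zero hε, ← mul_sum]; ring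

theorem sum_range_sq_choose_add_mul_choose_sub_one (p : ℕ) [Fact p.Prime] (hp : 3 < p) :
    ∑ k ∈ range p, (((p + k).choose k * (p - 1).choose k : ℕ) : ZMod (p ^ 4)) ^ 2 = p := by
  have hp' : p.Prime := Fact.out
  have hcop : ∀ j ∈ Ico 1 p, j.Coprime (p ^ 4) := fun j hj =>
    Nat.coprime_prime_pow_of_pos_of_lt hp' (mem_Ico.mp hj).1 (mem_Ico.mp hj).2 4
  have hsq : (p : ZMod (p ^ 4)) ^ 3 * ∑ j ∈ Ico 1 p, ((j : ZMod (p ^ 4))⁻¹) ^ 2 = 0 := by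
    rw [← Nat.cast_pow]
    refine natCast_mul_eq_zero_of_castHom_eq_zero (m := p) (by ring) ?_
    rw [map_sum]
    calc _ = ∑ j ∈ Ico 1 p, ((j : ZMod p)⁻¹) ^ 2 :=
          sum_congr rfl fun j hj => by rw [map_pow, map_inv_natCast _ (hcop j hj)]
      _ = 0 := sum_Ico_inv_pow_eq_zero p two_ne_zero (by omega)
  have hharm : (p : ZMod (p ^ 4)) ^ 2 * ∑ j ∈ Ico 1 p, (j : ZMod (p ^ 4))⁻¹ = 0 := by
    rw [← Nat.cast_pow]
    refine natCast_mul_eq_zero_of_castHom_eq_zero (m := p ^ 2) (by ring) ?_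
    rw [map_sum]
    calc _ = ∑ j ∈ Ico 1 p, (j : ZMod (p ^ 2))⁻¹ :=
          sum_congr rfl fun j hj => map_inv_natCast _ (hcop j hj)
      _ = 0 := sum_Ico_inv_eq_zero p hp
  have hsplit : ∑ j ∈ Ico 1 p, (p - j) • ((j : ZMod (p ^ 4))⁻¹) ^ 2 =
      p * ∑ j ∈ Ico 1 p, ((j : ZMod (p ^ 4))⁻¹) ^ 2 - ∑ j ∈ Ico 1 p, (j : ZMod (p ^ 4))⁻¹ := by
    rw [mul_sum, ← sum_sub_distrib]
    refine sum_congr rfl fun j hj => ?_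
    rw [nsmul_eq_mul, Nat.cast_sub (mem_Ico.mp hj).2.le]
    linear_combination (-(j : ZMod (p ^ 4))⁻¹) * coe_mul_inv_eq_one j (hcop j hj)
  calc _ = ∑ k ∈ range p,
        (1 - 2 * (p : ZMod (p ^ 4)) ^ 2 * ∑ j ∈ Icc 1 k, ((j : ZMod (p ^ 4))⁻¹) ^ 2) :=
        sum_congr rfl fun k hk => sq_choose_add_mul_choose_sub_one hp' (mem_range.mp hk)
    _ = p - 2 * p ^ 2 * ∑ j ∈ Ico 1 p, (p - j) • ((j : ZMod (p ^ 4))⁻¹) ^ 2 := by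
      rw [sum_sub_distrib, ← mul_sum, sum_range_sum_Icc_one_eq_sum_Ico_nsmul]
      simp
    _ = p := by rw [hsplit]; linear_combination (-2) * hsq + 2 * hharm

end ZMod

theorem stmt16 (p : ℕ) (hp : p.Prime) (hp3 : 3 < p) :
    (∑ k ∈ Finset.range p, (Nat.choose (p + k) k) ^ 2 * (Nat.choose (p - 1) k) ^ 2) ≡
      p [MOD 2 * p ^ 4] := by
  have := Fact.mk hp
  have hodd : Odd p := hp.odd_of_ne_two (by omega)
  have hcop : Nat.Coprime 2 (p ^ 4) :=
    Nat.Coprime.pow_right 4 ((Nat.coprime_primes Nat.prime_two hp).mpr (by omega))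
  refine (Nat.modEq_and_modEq_iff_modEq_mul hcop).mp ⟨?_, ?_⟩
  · exact (Nat.sum_range_choose_add_sq_mul_choose_sub_one_sq_modEq_one hodd).trans
      (Nat.odd_iff.mp hodd).symm
  · rw [← ZMod.natCast_eq_natCast_iff, ← ZMod.sum_range_sq_choose_add_mul_choose_sub_one p hp3]
    push_cast
    simp only [mul_pow]
end

section
/- Let a_1,...,a_m be integers, b_1,...,b_m nonnegative integers, and n a positive integer. Then ∑_{k=0}^{n-1} (-1)^{mk} · ∏_{i=1}^m C(a_i - 1, b_i + k) ≡ 0 modulo gcd(a_1,...,a_m, b_1,...,b_m, n), where for negative upper argument the binomial coefficient C(a-1, b+k) is interpreted via the polynomial extension (a-1)(a-2)···(a-b-k)/(b+k)!. -/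
/-!
Write `P(k) = (-1)^(m k) ∏ᵢ C(aᵢ - 1, bᵢ + k) = ∏ᵢ fᵢ(k)` with
`fᵢ(k) = (-1)^k C(aᵢ - 1, bᵢ + k)`.
Summation by parts gives `∑_{k<n} P(k) = n P(n) - ∑_{k<n} (k+1)(P(k+1) - P(k))`, and `d ∣ n`,
so it suffices that `d ∣ (k+1)(P(k+1) - P(k))`. This property passes from the factors to the
product, and for one factor Pascal's rule gives `fᵢ(k+1) - fᵢ(k) = ± C(aᵢ, bᵢ+k+1)`, while
`(k+1) C(a, b+k+1) = a C(a-1, b+k) - b C(a, b+k+1)` is divisible by `d`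
since `d ∣ a` and `d ∣ b`.
-/

open Finset

theorem Finset.sum_range_eq_mul_sub_sum_range_add_one_mul_sub {R : Type*} [CommRing R]
    (P : ℕ → R) (n : ℕ) :
    ∑ k ∈ range n, P k = n * P n - ∑ k ∈ range n, (k + 1) * (P (k + 1) - P k) := by
  have telescope := Finset.sum_range_sub (fun k => (k : R) * P k) n
  simp only [Nat.cast_add, Nat.cast_one, Nat.cast_zero, zero_mul, sub_zero] at telescope
  rw [← telescope, ← Finset.sum_sub_distrib]
  exact Finset.sum_congr rfl fun k _ => by ring

theorem dvd_sum_range_of_dvd_add_one_mul_sub {R : Type*} [CommRing R] {d : R} {P : ℕ → R}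
    {n : ℕ} (hn : d ∣ n) (hP : ∀ k, d ∣ (k + 1) * (P (k + 1) - P k)) :
    d ∣ ∑ k ∈ range n, P k := by
  rw [Finset.sum_range_eq_mul_sub_sum_range_add_one_mul_sub]
  exact dvd_sub (hn.mul_right _) (Finset.dvd_sum fun k _ => hP k)

theorem Finset.dvd_mul_prod_sub_prod {ι R : Type*} [CommRing R] {d u : R} {f g : ι → R}
    (s : Finset ι) (h : ∀ i ∈ s, d ∣ u * (f i - g i)) :
    d ∣ u * (∏ i ∈ s, f i - ∏ i ∈ s, g i) := by
  classical
  induction s using Finset.induction_on with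
  | empty => simp
  | insert j s hj ih =>
    rw [prod_insert hj, prod_insert hj]
    have expand : u * (f j * ∏ i ∈ s, f i - g j * ∏ i ∈ s, g i) =
        u * (f j - g j) * ∏ i ∈ s, f i + g j * (u * (∏ i ∈ s, f i - ∏ i ∈ s, g i)) := by
      ring
    rw [expand]
    exact dvd_add ((h j (mem_insert_self j s)).mul_right _)
      ((ih fun i hi => h i (mem_insert_of_mem hi)).mul_left _)

theorem Ring.add_one_mul_choose_add_one {R : Type*} [Ring R] [BinomialRing R] (r : R) (k : ℕ) :
    (k + 1 : R) * Ring.choose r (k + 1) = r * Ring.choose (r - 1) k := by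
  have h := Ring.choose_smul_choose r (Nat.le_add_left 1 k)
  rwa [Nat.choose_one_right, Ring.choose_one_right, Nat.cast_one, Nat.add_sub_cancel,
    nsmul_eq_mul, Nat.cast_add_one] at h

theorem dvd_add_one_mul_choose_add_add_one {R : Type*} [CommRing R] [BinomialRing R]
    {d r : R} {b : ℕ} (hr : d ∣ r) (hb : d ∣ (b : R)) (k : ℕ) :
    d ∣ (k + 1 : R) * Ring.choose r (b + k + 1) := by
  have key : (k + 1 : R) * Ring.choose r (b + k + 1) =
      r * Ring.choose (r - 1) (b + k) - b * Ring.choose r (b + k + 1) := by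
    rw [← Ring.add_one_mul_choose_add_one]
    push_cast
    ring
  rw [key]
  exact dvd_sub (hr.mul_right _) (hb.mul_right _)

theorem dvd_add_one_mul_neg_one_pow_mul_choose_sub {R : Type*} [CommRing R] [BinomialRing R]
    {d a : R} {b : ℕ} (ha : d ∣ a) (hb : d ∣ (b : R)) (k : ℕ) :
    d ∣ (k + 1 : R) * ((-1) ^ (k + 1) * Ring.choose (a - 1) (b + (k + 1)) -
      (-1) ^ k * Ring.choose (a - 1) (b + k)) := by
  have pascal : (-1) ^ (k + 1) * Ring.choose (a - 1) (b + (k + 1)) -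
      (-1) ^ k * Ring.choose (a - 1) (b + k) = (-1) ^ (k + 1) * Ring.choose a (b + k + 1) := by
    rw [← add_assoc, ← sub_add_cancel a 1, Ring.choose_succ_succ, add_sub_cancel_right,
      pow_succ]
    ring
  rw [pascal, mul_left_comm]
  exact (dvd_add_one_mul_choose_add_add_one ha hb k).mul_left _

theorem stmt18_general (m : ℕ) (a : Fin m → ℤ) (b : Fin m → ℕ) (n : ℕ) :
    (↑(Nat.gcd (Finset.univ.gcd fun i => (a i).natAbs)
        (Nat.gcd (Finset.univ.gcd b) n)) : ℤ) ∣
      ∑ k ∈ Finset.range n, (-1 : ℤ) ^ (m * k) * ∏ i, Ring.choose (a i - 1) (b i + k) := by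
  set d := Nat.gcd (Finset.univ.gcd fun i => (a i).natAbs) (Nat.gcd (Finset.univ.gcd b) n)
  have hda (i : Fin m) : (d : ℤ) ∣ a i :=
    Int.natCast_dvd.mpr ((Nat.gcd_dvd_left _ _).trans (Finset.gcd_dvd (mem_univ i)))
  have hdb (i : Fin m) : (d : ℤ) ∣ (b i : ℤ) := Int.natCast_dvd_natCast.mpr
    (((Nat.gcd_dvd_right _ _).trans (Nat.gcd_dvd_left _ _)).trans (Finset.gcd_dvd (mem_univ i)))
  have hdn : (d : ℤ) ∣ (n : ℤ) :=
    Int.natCast_dvd_natCast.mpr ((Nat.gcd_dvd_right _ _).trans (Nat.gcd_dvd_right _ _))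
  have distrib (k : ℕ) : (-1 : ℤ) ^ (m * k) * ∏ i, Ring.choose (a i - 1) (b i + k) =
      ∏ i, (-1) ^ k * Ring.choose (a i - 1) (b i + k) := by
    rw [prod_mul_distrib, prod_const, card_univ, Fintype.card_fin, ← pow_mul, mul_comm k]
  simp only [distrib]
  exact dvd_sum_range_of_dvd_add_one_mul_sub hdn fun k => Finset.dvd_mul_prod_sub_prod _
    fun i _ => dvd_add_one_mul_neg_one_pow_mul_choose_sub (hda i) (hdb i) k

theorem stmt18 (m : ℕ) (a : Fin m → ℤ) (b : Fin m → ℕ) (n : ℕ) (hn : 0 < n) :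
    (↑(Nat.gcd (Finset.univ.gcd fun i => (a i).natAbs)
        (Nat.gcd (Finset.univ.gcd b) n)) : ℤ) ∣
      ∑ k ∈ Finset.range n, (-1 : ℤ) ^ (m * k) * ∏ i, Ring.choose (a i - 1) (b i + k) :=
  stmt18_general m a b n
end

section
/- For all nonnegative integers n, the identity ∑_{k=0}^{n} (n choose k)_q^2 · q^{k^2 - k} = 2·(2n-1 choose n)_q holds in the polynomial ring ℤ[q], where (a choose b)_q denotes the Gaussian q-binomial coefficient, with the convention that the right side equals 1 when n = 0. -/
open Polynomial

/-- The Gaussian `q`-binomial coefficient as a polynomial in `q` over `ℤ`,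
defined via the `q`-Pascal recurrence
`[n+1, k+1]_q = [n, k]_q + q^(k+1) * [n, k+1]_q`. -/
noncomputable def gaussBinom : ℕ → ℕ → Polynomial ℤ
  | _, 0 => 1
  | 0, _ + 1 => 0
  | n + 1, k + 1 => gaussBinom n k + X ^ (k + 1) * gaussBinom n (k + 1)

lemma gb_zero (n : ℕ) : gaussBinom n 0 = 1 := by cases n <;> rfl

lemma gb_succ (n k : ℕ) :
    gaussBinom (n+1) (k+1) = gaussBinom n k + X ^ (k + 1) * gaussBinom n (k + 1) := rfl

lemma gb_eq_zero : ∀ {n k : ℕ}, n < k → gaussBinom n k = 0 := by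
  intro n
  induction n with
  | zero => intro k h; obtain ⟨k, rfl⟩ := Nat.exists_eq_add_of_lt h; rfl
  | succ n ih =>
    intro k h
    obtain ⟨j, rfl⟩ : ∃ j, k = j + 1 := ⟨k - 1, by omega⟩
    rw [gb_succ, ih (by omega), ih (by omega), mul_zero, add_zero]

lemma gb_self : ∀ n : ℕ, gaussBinom n n = 1 := by
  intro n
  induction n with
  | zero => rfl
  | succ n ih => rw [gb_succ, ih, gb_eq_zero (by omega), mul_zero, add_zero]

lemma gb_one : ∀ n : ℕ, gaussBinom n 1 = ∑ i ∈ Finset.range n, X ^ i := by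
  intro n
  induction n with
  | zero => simp [gaussBinom]
  | succ n ih =>
    rw [gb_succ, gb_zero, ih, Finset.sum_range_succ']
    simp only [Finset.mul_sum, pow_succ, pow_zero]
    ring_nf

lemma gb_pascal' : ∀ n k : ℕ,
    gaussBinom (n+1) (k+1) = gaussBinom n (k+1) + X ^ (n - k) * gaussBinom n k := by
  intro n
  induction n with
  | zero =>
    intro k
    cases k with
    | zero => simp [gb_succ, gaussBinom]
    | succ j =>
      simp [gb_succ, gb_eq_zero (show (0:ℕ) < j+1 by omega),
        gb_eq_zero (show (0:ℕ) < j+2 by omega), gb_eq_zero (show (1:ℕ) < j+2 by omega)]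
  | succ n ih =>
    intro k
    cases k with
    | zero =>
      simp only [zero_add, Nat.sub_zero, gb_zero, mul_one, gb_one]
      rw [Finset.sum_range_succ]
    | succ j =>
      conv_lhs => rw [gb_succ, ih j, ih (j+1)]
      conv_rhs => rw [gb_succ, gb_succ]
      by_cases h : j + 1 ≤ n
      · obtain ⟨a, rfl⟩ : ∃ a, n = a + (j+1) := ⟨n - (j+1), by omega⟩
        rw [show a+(j+1)+1-(j+1) = a+1 by omega, show a+(j+1)-j = a+1 by omega,
            show a+(j+1)-(j+1) = a by omega]
        ring
      · rw [gb_eq_zero (show n < j + 1 by omega), gb_eq_zero (show n < j + 1 + 1 by omega),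
            show n+1-(j+1) = n-j by omega]
        ring

lemma gb_symm : ∀ n k : ℕ, k ≤ n → gaussBinom n (n - k) = gaussBinom n k := by
  intro n
  induction n with
  | zero => intro k h; interval_cases k; rfl
  | succ n ih =>
    intro k hk
    cases k with
    | zero => simp [gb_self, gb_zero]
    | succ j =>
      by_cases hj : j < n
      · rw [show n + 1 - (j+1) = (n - (j+1)) + 1 by omega, gb_pascal',
            show n - (j+1) + 1 = n - j by omega, show n - (n - (j+1)) = j + 1 by omega,
            ih j (by omega), ih (j+1) (by omega), gb_succ]
      · have : j = n := by omega
        subst this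
        simp [gb_self, gb_zero]

lemma gb_vandermonde (n : ℕ) : ∀ m c : ℕ, gaussBinom (m+n) c
    = ∑ k ∈ Finset.range (c+1), gaussBinom m k * gaussBinom n (c-k) * X^((m-k)*(c-k)) := by
  intro m
  induction m with
  | zero =>
    intro c
    rw [Finset.sum_eq_single 0]
    · simp [gb_zero]
    · intro b _ hb0
      obtain ⟨j, rfl⟩ : ∃ j, b = j+1 := ⟨b-1, by omega⟩
      rw [gb_eq_zero (show 0 < j+1 by omega)]; ring
    · intro h; exact absurd (Finset.mem_range.2 (by omega)) h
  | succ m ih =>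
    intro c
    cases c with
    | zero => simp [gb_zero]
    | succ c =>
      have key : ∀ j ∈ Finset.range (c+1),
          gaussBinom m j * gaussBinom n (c-j) * X^((m-j)*(c-j))
            + X^(c+1) * (gaussBinom m (j+1) * gaussBinom n (c+1-(j+1)) * X^((m-(j+1))*(c+1-(j+1))))
          = gaussBinom (m+1) (j+1) * gaussBinom n (c+1-(j+1)) * X^((m+1-(j+1))*(c+1-(j+1))) := by
        intro j hj
        have hjc : j ≤ c := by simpa [Nat.lt_succ_iff] using hj
        rw [gb_succ, show c+1-(j+1) = c-j by omega, show m+1-(j+1) = m-j by omega]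
        by_cases hm : j+1 ≤ m
        · obtain ⟨a, rfl⟩ : ∃ a, m = a + (j+1) := ⟨m - (j+1), by omega⟩
          obtain ⟨b, rfl⟩ : ∃ b, c = b + j := ⟨c - j, by omega⟩
          rw [show a+(j+1)-j = a+1 by omega, show a+(j+1)-(j+1) = a by omega,
              show b+j-j = b by omega]
          ring
        · rw [gb_eq_zero (show m < j+1 by omega)]
          ring
      rw [show m+1+n = (m+n)+1 by omega, gb_succ, ih c, ih (c+1),
          Finset.sum_range_succ' (fun k => gaussBinom m k * gaussBinom n (c+1-k) * X^((m-k)*(c+1-k))) (c+1)]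
      conv_rhs => rw [Finset.sum_range_succ'
        (fun k => gaussBinom (m+1) k * gaussBinom n (c+1-k) * X^((m+1-k)*(c+1-k))) (c+1)]
      rw [mul_add, Finset.mul_sum, ← add_assoc, ← Finset.sum_add_distrib, Finset.sum_congr rfl key]
      congr 1
      simp only [Nat.sub_zero, gb_zero, one_mul]
      rw [show (m+1)*(c+1) = m*(c+1)+(c+1) by ring]
      ring

theorem stmt19 (n : ℕ) :
    ∑ k ∈ Finset.range (n + 1), (gaussBinom n k) ^ 2 * X ^ (k ^ 2 - k) =
      if n = 0 then 1 else 2 * gaussBinom (2 * n - 1) n := by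
  cases n with
  | zero => simp [gb_zero]
  | succ m =>
    simp only [Nat.succ_ne_zero, if_false]
    rw [show 2 * (m+1) - 1 = 2*m+1 by omega, two_mul]
    have hsymm : gaussBinom (2*m+1) (m+1) = gaussBinom (2*m+1) m := by
      rw [← gb_symm (2*m+1) m (by omega), show 2*m+1-m = m+1 by omega]
    conv_rhs => rw [show gaussBinom (2*m+1) (m+1) + gaussBinom (2*m+1) (m+1)
        = gaussBinom (2*m+1) (m+1) + gaussBinom (2*m+1) m by rw [hsymm]]
    rw [show 2*m+1 = (m+1)+m by omega, gb_vandermonde m (m+1) (m+1), gb_vandermonde m (m+1) m]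
    conv_rhs => rw [Finset.sum_range_succ _ (m+1)]
    have hA : gaussBinom (m+1) (m+1) * gaussBinom m (m+1-(m+1))
        * (X:Polynomial ℤ)^((m+1-(m+1))*(m+1-(m+1))) = 1 := by
      rw [gb_self, show m+1-(m+1) = 0 by omega, gb_zero]; simp
    rw [hA]
    conv_lhs => rw [← Finset.sum_range_reflect (fun k => (gaussBinom (m+1) k)^2 * X^(k^2-k)) (m+2),
        Finset.sum_range_succ _ (m+1)]
    have hB : ((gaussBinom (m+1) (m+2-1-(m+1)))^2
        * (X:Polynomial ℤ)^((m+2-1-(m+1))^2 - (m+2-1-(m+1)))) = 1 := by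
      rw [show m+2-1-(m+1) = 0 by omega, gb_zero]; simp
    rw [hB]
    have key : ∀ k ∈ Finset.range (m+1),
        ((gaussBinom (m+1) (m+2-1-k))^2 * X^((m+2-1-k)^2 - (m+2-1-k)) : Polynomial ℤ)
        = gaussBinom (m+1) k * gaussBinom m (m+1-k) * X^((m+1-k)*(m+1-k))
          + gaussBinom (m+1) k * gaussBinom m (m-k) * X^((m+1-k)*(m-k)) := by
      intro k hk
      have hkm : k ≤ m := by simpa [Nat.lt_succ_iff] using hk
      obtain ⟨t, rfl⟩ : ∃ t, m = t + k := ⟨m - k, by omega⟩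
      rw [show t+k+2-1-k = t+1 by omega, show t+k+1-k = t+1 by omega, show t+k-k = t by omega,
          show (t+1)^2 - (t+1) = (t+1)*t by rw [pow_two, Nat.mul_succ, Nat.add_sub_cancel],
          show gaussBinom (t+k+1) k = gaussBinom (t+k+1) (t+1) by
            rw [← gb_symm (t+k+1) k (by omega), show t+k+1-k = t+1 by omega],
          gb_succ (t+k) t]
      ring
    rw [Finset.sum_congr rfl key, Finset.sum_add_distrib]
    ring
end
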